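/- arXiv:1508.00640 — 9 statements merged into one kernel-verified Lean document; each statement's English description precedes it below -/
import Mathlib

section
/- If A is the negacyclic matrix of order v with first row a, then A A^T = Σ_{k=0}^{v-1} NAF_a(k) N^k, where N is the negacyclic shift matrix. -/
/-- Ordinary autocorrelation `AF_a(k) = Σ_{i=0}^{v-k-1} a_i a_{i+k}`. -/
def AF (v : ℕ) (a : ℕ → ℤ) (k : ℕ) : ℤ :=
  ∑ i ∈ Finset.range (v - k), a i * a (i + k)

/-- Negaperiodic autocorrelation `NAF_a(k) = AF_a(k) - AF_a(v-k)`. -/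
def NAF (v : ℕ) (a : ℕ → ℤ) (k : ℕ) : ℤ :=
  AF v a k - AF v a (v - k)

/-- The negacyclic shift matrix `N` of order `v`:
`N_{i,i+1} = 1`, `N_{v-1,0} = -1`, and `0` elsewhere. -/
def negaShift (v : ℕ) : Matrix (Fin v) (Fin v) ℤ :=
  Matrix.of fun i j => if (i : ℕ) + 1 = (j : ℕ) then 1
    else if (i : ℕ) = v - 1 ∧ (j : ℕ) = 0 then -1 else 0

/-- The negacyclic matrix with first row `a`: `A = Σ_{i=0}^{v-1} a_i N^i`. -/
def negacyclic (v : ℕ) (a : ℕ → ℤ) : Matrix (Fin v) (Fin v) ℤ :=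
  ∑ i ∈ Finset.range v, a i • (negaShift v) ^ i

open Finset Matrix

lemma negaShift_pow_apply (v k : ℕ) (hk : k ≤ v) (i j : Fin v) :
    ((negaShift v) ^ k) i j =
      if (i : ℕ) + k = j then 1 else if (i : ℕ) + k = (j : ℕ) + v then -1 else 0 := by
  induction k generalizing i j with
  | zero =>
    have hi := i.isLt; have hj := j.isLt
    simp only [pow_zero, Matrix.one_apply, Nat.add_zero]
    by_cases h : i = j
    · subst h; simp
    · rw [if_neg h, if_neg (by simpa [Fin.ext_iff] using h), if_neg (by omega)]
  | succ k ih =>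
    have hk' : k ≤ v := Nat.le_of_succ_le hk
    rw [pow_succ', Matrix.mul_apply]
    have hi := i.isLt; have hj := j.isLt
    by_cases hiv : (i : ℕ) + 1 = v
    · have h0 : 0 < v := by omega
      rw [Finset.sum_eq_single (⟨0, h0⟩ : Fin v)]
      · rw [ih hk']
        simp only [negaShift, Matrix.of_apply]
        rw [if_neg (by omega), if_pos ⟨by omega, by simp⟩]
        simp only [Fin.val_mk, Nat.zero_add]
        have : ¬ ((i:ℕ) + (k+1) = j) := by omega
        rw [if_neg this]
        by_cases h2 : k = (j : ℕ)
        · rw [if_pos (by omega), if_pos (by omega)]; ring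
        · rw [if_neg (by omega), if_neg (by omega), if_neg (by omega)]; ring
      · intro l _ hl
        simp only [negaShift, Matrix.of_apply]
        rw [if_neg (by omega), if_neg (by simp [Fin.ext_iff] at hl ⊢; omega)]
        ring
      · simp
    · have h1 : (i : ℕ) + 1 < v := by omega
      rw [Finset.sum_eq_single (⟨(i:ℕ)+1, h1⟩ : Fin v)]
      · rw [ih hk']
        simp only [negaShift, Matrix.of_apply, Fin.val_mk]
        rw [if_pos trivial]
        have e1 : (i:ℕ) + 1 + k = (i:ℕ) + (k+1) := by omega
        rw [e1]; ring
      · intro l _ hl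
        simp only [negaShift, Matrix.of_apply]
        rw [if_neg (by simp [Fin.ext_iff] at hl ⊢; omega), if_neg (by omega)]
        ring
      · simp

lemma negaShift_pow_self (v : ℕ) (hv : 0 < v) : (negaShift v) ^ v = -1 := by
  ext i j
  rw [negaShift_pow_apply v v le_rfl, Matrix.neg_apply, Matrix.one_apply]
  have hi := i.isLt; have hj := j.isLt
  by_cases h : i = j
  · subst h; rw [if_neg (by omega), if_pos (by omega), if_pos rfl]
  · rw [if_neg (by omega), if_neg (by simp [Fin.ext_iff] at h ⊢; omega), if_neg h, neg_zero]

lemma negaShift_transpose (v : ℕ) (hv : 0 < v) :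
    (negaShift v)ᵀ = -((negaShift v) ^ (v - 1)) := by
  ext i j
  rw [Matrix.transpose_apply, Matrix.neg_apply, negaShift_pow_apply v (v-1) (by omega)]
  simp only [negaShift, Matrix.of_apply]
  have hi := i.isLt; have hj := j.isLt
  by_cases h1 : (j:ℕ) + 1 = (i:ℕ)
  · rw [if_pos h1, if_neg (by omega), if_pos (by omega)]; ring
  · rw [if_neg h1]
    by_cases h2 : (j:ℕ) = v - 1 ∧ (i:ℕ) = 0
    · rw [if_pos h2, if_pos (by omega)]
    · rw [if_neg h2, if_neg (by omega), if_neg (by omega)]; ring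

lemma negaShift_mul_transpose (v : ℕ) (hv : 0 < v) :
    negaShift v * (negaShift v)ᵀ = 1 := by
  rw [negaShift_transpose v hv, mul_neg, ← pow_succ', Nat.sub_add_cancel hv,
    negaShift_pow_self v hv, neg_neg]

lemma negaShift_transpose_mul (v : ℕ) (hv : 0 < v) :
    (negaShift v)ᵀ * negaShift v = 1 := by
  rw [negaShift_transpose v hv, neg_mul, ← pow_succ, Nat.sub_add_cancel hv,
    negaShift_pow_self v hv, neg_neg]

lemma negaShift_pow_mul_transpose_pow (v : ℕ) (hv : 0 < v) (d : ℕ) :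
    (negaShift v) ^ d * ((negaShift v)ᵀ) ^ d = 1 := by
  induction d with
  | zero => simp
  | succ d ih =>
    rw [pow_succ, pow_succ', mul_assoc, ← mul_assoc (negaShift v),
      negaShift_mul_transpose v hv, one_mul, ih]

lemma negaShift_transpose_pow_mul_pow (v : ℕ) (hv : 0 < v) (d : ℕ) :
    ((negaShift v)ᵀ) ^ d * (negaShift v) ^ d = 1 := by
  induction d with
  | zero => simp
  | succ d ih =>
    rw [pow_succ, pow_succ', mul_assoc, ← mul_assoc ((negaShift v)ᵀ),
      negaShift_transpose_mul v hv, one_mul, ih]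

lemma negaShift_transpose_pow (v : ℕ) (hv : 0 < v) (d : ℕ) (hd : d ≤ v) :
    ((negaShift v)ᵀ) ^ d = -((negaShift v) ^ (v - d)) := by
  have h2 : (negaShift v) ^ d * (-((negaShift v) ^ (v - d))) = 1 := by
    rw [mul_neg, ← pow_add, Nat.add_sub_cancel' hd, negaShift_pow_self v hv, neg_neg]
  calc ((negaShift v)ᵀ) ^ d
      = ((negaShift v)ᵀ) ^ d * ((negaShift v) ^ d * (-((negaShift v) ^ (v - d)))) := by
        rw [h2, mul_one]
    _ = (((negaShift v)ᵀ) ^ d * (negaShift v) ^ d) * (-((negaShift v) ^ (v - d))) := by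
        rw [mul_assoc]
    _ = -((negaShift v) ^ (v - d)) := by
        rw [negaShift_transpose_pow_mul_pow v hv, one_mul]

lemma negaShift_mix_le (v : ℕ) (hv : 0 < v) {i j : ℕ} (hji : j ≤ i) :
    (negaShift v) ^ i * ((negaShift v)ᵀ) ^ j = (negaShift v) ^ (i - j) := by
  conv_lhs => rw [show i = (i - j) + j from (Nat.sub_add_cancel hji).symm]
  rw [pow_add, mul_assoc, negaShift_pow_mul_transpose_pow v hv, mul_one]

lemma negaShift_mix_lt (v : ℕ) (hv : 0 < v) {i j : ℕ} (hij : i < j) (hjv : j ≤ v) :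
    (negaShift v) ^ i * ((negaShift v)ᵀ) ^ j = -((negaShift v) ^ (v - (j - i))) := by
  have : ((negaShift v)ᵀ) ^ j = ((negaShift v)ᵀ) ^ i * ((negaShift v)ᵀ) ^ (j - i) := by
    rw [← pow_add, Nat.add_sub_cancel' (Nat.le_of_lt hij)]
  rw [this, ← mul_assoc, negaShift_pow_mul_transpose_pow v hv, one_mul,
    negaShift_transpose_pow v hv (j - i) (by omega)]

/-- if `A` is the negacyclic matrix with first row `a`, then
`A Aᵀ = Σ_{k=0}^{v-1} NAF_a(k) N^k`. -/
theorem negacyclic_mul_transpose_eq_naf_sum (v : ℕ) (hv : 0 < v) (a : ℕ → ℤ) :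
    (negacyclic v a) * (negacyclic v a).transpose =
      ∑ k ∈ Finset.range v, NAF v a k • (negaShift v) ^ k := by
  classical
  set N := negaShift v with hN
  have hA : (negacyclic v a).transpose = ∑ j ∈ Finset.range v, a j • (Nᵀ) ^ j := by
    rw [negacyclic, Matrix.transpose_sum]
    exact Finset.sum_congr rfl fun j _ => by
      rw [Matrix.transpose_smul, Matrix.transpose_pow]
  rw [hA, negacyclic, Finset.sum_mul_sum]
  have key : ∀ p ∈ Finset.range v ×ˢ Finset.range v,
      (a p.1 • N ^ p.1) * (a p.2 • (Nᵀ) ^ p.2) =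
      if p.2 ≤ p.1 then (a p.1 * a p.2) • N ^ (p.1 - p.2)
        else (a p.1 * a p.2) • (-(N ^ (v - (p.2 - p.1)))) := by
    intro p hp
    simp only [Finset.mem_product, Finset.mem_range] at hp
    rw [smul_mul_assoc, mul_smul_comm, smul_smul]
    by_cases h : p.2 ≤ p.1
    · rw [if_pos h, negaShift_mix_le v hv h]
    · rw [if_neg h, negaShift_mix_lt v hv (by omega) (by omega)]
  rw [← Finset.sum_product', Finset.sum_congr rfl key, Finset.sum_ite]
  have e1 : ∑ p ∈ (Finset.range v ×ˢ Finset.range v).filter (fun p => p.2 ≤ p.1),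
      (a p.1 * a p.2) • N ^ (p.1 - p.2) = ∑ k ∈ Finset.range v, AF v a k • N ^ k := by
    symm
    simp only [AF, Finset.sum_smul]
    rw [Finset.sum_sigma']
    refine Finset.sum_nbij' (fun q => (q.2 + q.1, q.2)) (fun p => ⟨p.1 - p.2, p.2⟩)
      ?_ ?_ ?_ ?_ ?_
    · intro q hq
      simp only [Finset.mem_sigma, Finset.mem_range] at hq
      simp only [Finset.mem_filter, Finset.mem_product, Finset.mem_range]
      omega
    · intro p hp
      simp only [Finset.mem_filter, Finset.mem_product, Finset.mem_range] at hp
      simp only [Finset.mem_sigma, Finset.mem_range]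
      omega
    · intro q hq
      obtain ⟨k, i⟩ := q
      simp only [Finset.mem_sigma, Finset.mem_range] at hq
      have h : i + k - i = k := by omega
      dsimp only
      rw [h]
    · intro p hp
      simp only [Finset.mem_filter, Finset.mem_product, Finset.mem_range] at hp
      obtain ⟨p1, p2⟩ := p
      simp only at hp
      have h : p2 + (p1 - p2) = p1 := by omega
      dsimp only
      rw [h]
    · intro q hq
      obtain ⟨k, i⟩ := q
      simp only
      rw [mul_comm, Nat.add_sub_cancel_left]
  have e2 : ∑ p ∈ (Finset.range v ×ˢ Finset.range v).filter (fun p => ¬ p.2 ≤ p.1),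
      (a p.1 * a p.2) • (-(N ^ (v - (p.2 - p.1)))) =
      ∑ k ∈ Finset.range v, (-(AF v a (v - k))) • N ^ k := by
    symm
    have inner : ∀ k ∈ Finset.range v, (-(AF v a (v - k))) • N ^ k =
        ∑ i ∈ Finset.range k, (a i * a (i + (v - k))) • (-(N ^ k)) := by
      intro k hk
      simp only [Finset.mem_range] at hk
      rw [AF, show v - (v - k) = k from by omega]
      simp only [smul_neg]
      rw [Finset.sum_neg_distrib, ← Finset.sum_smul, neg_smul]
    rw [Finset.sum_congr rfl inner, Finset.sum_sigma']
    refine Finset.sum_nbij' (fun q => (q.2, q.2 + (v - q.1)))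
      (fun p => ⟨v - (p.2 - p.1), p.1⟩) ?_ ?_ ?_ ?_ ?_
    · intro q hq
      simp only [Finset.mem_sigma, Finset.mem_range] at hq
      simp only [Finset.mem_filter, Finset.mem_product, Finset.mem_range]
      omega
    · intro p hp
      simp only [Finset.mem_filter, Finset.mem_product, Finset.mem_range] at hp
      simp only [Finset.mem_sigma, Finset.mem_range]
      omega
    · intro q hq
      obtain ⟨k, i⟩ := q
      simp only [Finset.mem_sigma, Finset.mem_range] at hq
      have h : v - (i + (v - k) - i) = k := by omega
      dsimp only
      rw [h]
    · intro p hp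
      simp only [Finset.mem_filter, Finset.mem_product, Finset.mem_range] at hp
      obtain ⟨p1, p2⟩ := p
      simp only at hp
      have h : p1 + (v - (v - (p2 - p1))) = p2 := by omega
      dsimp only
      rw [h]
    · intro q hq
      obtain ⟨k, i⟩ := q
      simp only [Finset.mem_sigma, Finset.mem_range] at hq
      have h : v - (i + (v - k) - i) = k := by omega
      dsimp only
      rw [h]
  rw [e1, e2, ← Finset.sum_add_distrib]
  refine Finset.sum_congr rfl fun k _ => ?_
  rw [NAF, sub_smul, neg_smul, ← sub_eq_add_neg]
end

section
/- For every length v ≥ 1, a pair of binary sequences of length v is a Golay pair if and only if it is both a periodic Golay pair and a negaperiodic Golay pair; i.e., GP_v = PGP_v ∩ NGP_v. -/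
/-- Periodic autocorrelation `PAF_a(k) = AF_a(k) + AF_a(v-k)`. -/
def PAF (v : ℕ) (a : ℕ → ℤ) (k : ℕ) : ℤ :=
  AF v a k + AF v a (v - k)

/-- for binary sequences of length `v ≥ 1`, being a Golay pair is equivalent
to being both a periodic Golay pair and a negaperiodic Golay pair:
`GP_v = PGP_v ∩ NGP_v`. -/
theorem golay_iff_periodic_and_negaperiodic (v : ℕ) (hv : 1 ≤ v) (a b : ℕ → ℤ)
    (ha : ∀ i, i < v → a i = 1 ∨ a i = -1)
    (hb : ∀ i, i < v → b i = 1 ∨ b i = -1) :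
    (∀ k, 0 < k → k < v → AF v a k + AF v b k = 0) ↔
      ((∀ k, 0 < k → k < v → PAF v a k + PAF v b k = 0) ∧
       (∀ k, 0 < k → k < v → NAF v a k + NAF v b k = 0)) := by
  constructor
  · intro h
    have key : ∀ k, 0 < k → k < v →
        AF v a (v - k) + AF v b (v - k) = 0 := fun k hk hkv =>
      h (v - k) (by omega) (by omega)
    constructor <;> intro k hk hkv <;>
      have h1 := h k hk hkv <;> have h2 := key k hk hkv <;>
      simp only [PAF, NAF] <;> linarith
  · rintro ⟨hp, hn⟩ k hk hkv
    have h1 := hp k hk hkv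
    have h2 := hn k hk hkv
    simp only [PAF, NAF] at h1 h2
    linarith
end

section
/- Let a^{(1)},...,a^{(s)} be binary sequences of length v and let X_i = Φ_v(a^{(i)}) ⊆ Z_{2v}, where Φ_v(a) = {i : a_i = 1} ∪ {v+i : a_i = -1}. If X_1,...,X_s form a relative difference family in Z_{2v} with forbidden subgroup {0,v}, then the sequences a^{(1)},...,a^{(s)} are N-complementary, i.e., Σ_i NAF_{a^{(i)}}(k) = 0 for all 0 < k < v. -/
/-- `Φ_v(a) = {i : a_i = 1} ∪ {v + i : a_i = -1} ⊆ Z_{2v}`. -/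
def Phi (v : ℕ) (a : ℕ → ℤ) : Finset (ZMod (2 * v)) :=
  (Finset.range v).image
    (fun i => if a i = 1 then ((i : ℕ) : ZMod (2 * v)) else ((v + i : ℕ) : ZMod (2 * v)))

/-- The number of triples `(i,j,k)` with `i, j ∈ X k` and `i - j = m` in `Z_{2v}`. -/
def diffCount (v s : ℕ) (X : Fin s → Finset (ZMod (2 * v))) (m : ZMod (2 * v)) : ℕ :=
  ∑ k : Fin s, (((X k) ×ˢ (X k)).filter (fun p => p.1 - p.2 = m)).card

/-- `X` is a relative difference family in `Z_{2v}` relative to `{0, v}`, with parameter `lam`. -/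
def IsRDF (v s : ℕ) (X : Fin s → Finset (ZMod (2 * v))) (lam : ℕ) : Prop :=
  (∀ m : ZMod (2 * v), m ≠ 0 → m ≠ ((v : ℕ) : ZMod (2 * v)) → diffCount v s X m = lam) ∧
  diffCount v s X ((v : ℕ) : ZMod (2 * v)) = 0

lemma castEq (v : ℕ) {A B : ℕ} (hA : A < 2*v) (hB : B < 4*v) :
    ((A : ZMod (2*v)) = (B : ZMod (2*v))) ↔ (A = B ∨ A + 2*v = B) := by
  haveI : NeZero (2*v) := ⟨by omega⟩
  have h1 : ((A : ZMod (2*v)) = (B : ZMod (2*v))) ↔ A = B % (2*v) := by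
    constructor
    · intro h
      have := congrArg ZMod.val h
      rwa [ZMod.val_cast_of_lt hA, ZMod.val_natCast] at this
    · intro h
      rw [h, ZMod.natCast_mod]
  rw [h1]
  rcases Nat.lt_or_ge B (2*v) with h | h
  · rw [Nat.mod_eq_of_lt h]; omega
  · have h2 : B % (2*v) = B - 2*v := by
      rw [Nat.mod_eq_sub_mod h, Nat.mod_eq_of_lt (by omega)]
    rw [h2]; omega

lemma subEq (v : ℕ) (P Q R : ℕ) (hP : P < 2*v) (hRQ : R + Q < 4*v) :
    (((P : ℕ) : ZMod (2*v)) - ((Q : ℕ) : ZMod (2*v)) = ((R : ℕ) : ZMod (2*v))) ↔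
      (P = R + Q ∨ P + 2*v = R + Q) := by
  rw [sub_eq_iff_eq_add, ← Nat.cast_add, castEq v hP hRQ]

lemma chi (v k : ℕ) (hk : 0 < k) (hkv : k < v) (b : ℕ → ℤ)
    (i j : ℕ) (hi : i < v) (hj : j < v) (hbi : b i = 1 ∨ b i = -1) (hbj : b j = 1 ∨ b j = -1) :
    ((if (if b i = 1 then ((i : ℕ) : ZMod (2*v)) else ((v + i : ℕ) : ZMod (2*v))) -
         (if b j = 1 then ((j : ℕ) : ZMod (2*v)) else ((v + j : ℕ) : ZMod (2*v))) =
         ((k : ℕ) : ZMod (2*v)) then (1:ℤ) else 0) -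
     (if (if b i = 1 then ((i : ℕ) : ZMod (2*v)) else ((v + i : ℕ) : ZMod (2*v))) -
         (if b j = 1 then ((j : ℕ) : ZMod (2*v)) else ((v + j : ℕ) : ZMod (2*v))) =
         ((k + v : ℕ) : ZMod (2*v)) then (1:ℤ) else 0)) =
    ((if i = j + k then b i * b j else 0) - (if j = i + (v - k) then b i * b j else 0)) := by
  rcases hbi with h1 | h1 <;> rcases hbj with h2 | h2
  · rw [if_pos h1, if_pos h2, h1, h2]
    have e1 : (((i:ℕ) : ZMod (2*v)) - ((j:ℕ) : ZMod (2*v)) = ((k:ℕ) : ZMod (2*v))) ↔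
        i = j + k := by rw [subEq v i j k (by omega) (by omega)]; omega
    have e2 : (((i:ℕ) : ZMod (2*v)) - ((j:ℕ) : ZMod (2*v)) = ((k+v:ℕ) : ZMod (2*v))) ↔
        j = i + (v - k) := by rw [subEq v i j (k+v) (by omega) (by omega)]; omega
    simp only [e1, e2]
    split_ifs <;> norm_num
  · have h2' : ¬ b j = 1 := by rw [h2]; norm_num
    rw [if_pos h1, if_neg h2', h1, h2]
    have e1 : (((i:ℕ) : ZMod (2*v)) - ((v+j:ℕ) : ZMod (2*v)) = ((k:ℕ) : ZMod (2*v))) ↔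
        j = i + (v - k) := by rw [subEq v i (v+j) k (by omega) (by omega)]; omega
    have e2 : (((i:ℕ) : ZMod (2*v)) - ((v+j:ℕ) : ZMod (2*v)) = ((k+v:ℕ) : ZMod (2*v))) ↔
        i = j + k := by rw [subEq v i (v+j) (k+v) (by omega) (by omega)]; omega
    simp only [e1, e2]
    split_ifs <;> norm_num
  · have h1' : ¬ b i = 1 := by rw [h1]; norm_num
    rw [if_neg h1', if_pos h2, h1, h2]
    have e1 : (((v+i:ℕ) : ZMod (2*v)) - ((j:ℕ) : ZMod (2*v)) = ((k:ℕ) : ZMod (2*v))) ↔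
        j = i + (v - k) := by rw [subEq v (v+i) j k (by omega) (by omega)]; omega
    have e2 : (((v+i:ℕ) : ZMod (2*v)) - ((j:ℕ) : ZMod (2*v)) = ((k+v:ℕ) : ZMod (2*v))) ↔
        i = j + k := by rw [subEq v (v+i) j (k+v) (by omega) (by omega)]; omega
    simp only [e1, e2]
    split_ifs <;> norm_num
  · have h1' : ¬ b i = 1 := by rw [h1]; norm_num
    have h2' : ¬ b j = 1 := by rw [h2]; norm_num
    rw [if_neg h1', if_neg h2', h1, h2]
    have e1 : (((v+i:ℕ) : ZMod (2*v)) - ((v+j:ℕ) : ZMod (2*v)) = ((k:ℕ) : ZMod (2*v))) ↔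
        i = j + k := by rw [subEq v (v+i) (v+j) k (by omega) (by omega)]; omega
    have e2 : (((v+i:ℕ) : ZMod (2*v)) - ((v+j:ℕ) : ZMod (2*v)) = ((k+v:ℕ) : ZMod (2*v))) ↔
        j = i + (v - k) := by rw [subEq v (v+i) (v+j) (k+v) (by omega) (by omega)]; omega
    simp only [e1, e2]
    split_ifs <;> norm_num

lemma cardTrans (v : ℕ) (hv : 0 < v) (b : ℕ → ℤ) (m : ZMod (2*v)) :
    (((Phi v b) ×ˢ (Phi v b)).filter (fun p => p.1 - p.2 = m)).card
    = (((Finset.range v) ×ˢ (Finset.range v)).filter (fun q : ℕ × ℕ =>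
        (if b q.1 = 1 then ((q.1 : ℕ) : ZMod (2*v)) else ((v + q.1 : ℕ) : ZMod (2*v))) -
        (if b q.2 = 1 then ((q.2 : ℕ) : ZMod (2*v)) else ((v + q.2 : ℕ) : ZMod (2*v))) = m)).card := by
  classical
  set f : ℕ → ZMod (2*v) :=
    fun i => if b i = 1 then ((i : ℕ) : ZMod (2*v)) else ((v + i : ℕ) : ZMod (2*v)) with hf
  have hfinj : ∀ i, i < v → ∀ j, j < v → f i = f j → i = j := by
    intro i hi j hj h
    simp only [hf] at h
    split_ifs at h <;> rw [castEq v (by omega) (by omega)] at h <;> omega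
  have hPhi : Phi v b = (Finset.range v).image f := rfl
  refine (Finset.card_bij (fun q _ => (f q.1, f q.2)) ?_ ?_ ?_).symm
  · intro q hq
    simp only [Finset.mem_filter, Finset.mem_product, Finset.mem_range] at hq
    simp only [Finset.mem_filter, Finset.mem_product, hPhi, Finset.mem_image]
    exact ⟨⟨⟨q.1, Finset.mem_range.2 hq.1.1, rfl⟩, ⟨q.2, Finset.mem_range.2 hq.1.2, rfl⟩⟩, hq.2⟩
  · intro q1 hq1 q2 hq2 h
    simp only [Finset.mem_filter, Finset.mem_product, Finset.mem_range] at hq1 hq2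
    have h1 := congrArg Prod.fst h
    have h2 := congrArg Prod.snd h
    exact Prod.ext (hfinj _ hq1.1.1 _ hq2.1.1 h1) (hfinj _ hq1.1.2 _ hq2.1.2 h2)
  · intro p hp
    simp only [Finset.mem_filter, Finset.mem_product, hPhi, Finset.mem_image] at hp
    obtain ⟨⟨⟨i, hi, hip⟩, ⟨j, hj, hjp⟩⟩, hm⟩ := hp
    refine ⟨(i, j), ?_, ?_⟩
    · simp only [Finset.mem_filter, Finset.mem_product]
      refine ⟨⟨hi, hj⟩, ?_⟩
      show f i - f j = m
      rw [hip, hjp]; exact hm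
    · simp only; rw [hip, hjp]


/-- if the images `Φ_v(a⁽ⁱ⁾)` of binary sequences form a relative difference
family in `Z_{2v}`, then the sequences are N-complementary. -/
theorem rdf_implies_N_complementary (v s : ℕ) (hv : 0 < v) (a : Fin s → ℕ → ℤ)
    (hbin : ∀ t : Fin s, ∀ i, i < v → a t i = 1 ∨ a t i = -1)
    (lam : ℕ) (hrdf : IsRDF v s (fun t => Phi v (a t)) lam) :
    ∀ k, 0 < k → k < v → ∑ t : Fin s, NAF v (a t) k = 0 := by
  classical
  intro k hk hkv
  obtain ⟨hAll, -⟩ := hrdf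
  have hm1 : diffCount v s (fun t => Phi v (a t)) ((k : ℕ) : ZMod (2*v)) = lam := by
    apply hAll
    · intro h
      rw [show (0 : ZMod (2*v)) = ((0 : ℕ) : ZMod (2*v)) by simp] at h
      rw [castEq v (by omega) (by omega)] at h; omega
    · intro h
      rw [castEq v (by omega) (by omega)] at h; omega
  have hm2 : diffCount v s (fun t => Phi v (a t)) ((k + v : ℕ) : ZMod (2*v)) = lam := by
    apply hAll
    · intro h
      rw [show (0 : ZMod (2*v)) = ((0 : ℕ) : ZMod (2*v)) by simp] at h
      rw [castEq v (by omega) (by omega)] at h; omega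
    · intro h
      rw [castEq v (by omega) (by omega)] at h; omega
  -- per-sequence identity
  have hper : ∀ t : Fin s,
      (((((Phi v (a t)) ×ˢ (Phi v (a t))).filter
          (fun p => p.1 - p.2 = ((k : ℕ) : ZMod (2*v)))).card : ℤ)
       - ((((Phi v (a t)) ×ˢ (Phi v (a t))).filter
          (fun p => p.1 - p.2 = ((k + v : ℕ) : ZMod (2*v)))).card : ℤ))
      = NAF v (a t) k := by
    intro t
    have hbv := hbin t
    rw [cardTrans v hv (a t), cardTrans v hv (a t)]
    rw [Finset.card_filter, Finset.card_filter]
    simp only [Nat.cast_sum, Nat.cast_ite, Nat.cast_one, Nat.cast_zero]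
    rw [← Finset.sum_sub_distrib]
    have step1 : ∀ q ∈ (Finset.range v) ×ˢ (Finset.range v),
        ((if (if a t q.1 = 1 then ((q.1 : ℕ) : ZMod (2*v)) else ((v + q.1 : ℕ) : ZMod (2*v))) -
             (if a t q.2 = 1 then ((q.2 : ℕ) : ZMod (2*v)) else ((v + q.2 : ℕ) : ZMod (2*v))) =
             ((k : ℕ) : ZMod (2*v)) then (1:ℤ) else 0) -
         (if (if a t q.1 = 1 then ((q.1 : ℕ) : ZMod (2*v)) else ((v + q.1 : ℕ) : ZMod (2*v))) -
             (if a t q.2 = 1 then ((q.2 : ℕ) : ZMod (2*v)) else ((v + q.2 : ℕ) : ZMod (2*v))) =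
             ((k + v : ℕ) : ZMod (2*v)) then (1:ℤ) else 0)) =
        ((if q.1 = q.2 + k then a t q.1 * a t q.2 else 0) -
         (if q.2 = q.1 + (v - k) then a t q.1 * a t q.2 else 0)) := by
      intro q hq
      simp only [Finset.mem_product, Finset.mem_range] at hq
      exact chi v k hk hkv (a t) q.1 q.2 hq.1 hq.2 (hbv q.1 hq.1) (hbv q.2 hq.2)
    rw [Finset.sum_congr rfl step1, Finset.sum_sub_distrib]
    have A1 : ∑ q ∈ (Finset.range v) ×ˢ (Finset.range v),
        (if q.1 = q.2 + k then a t q.1 * a t q.2 else 0) = AF v (a t) k := by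
      rw [Finset.sum_product, Finset.sum_comm]
      have inner : ∀ j ∈ Finset.range v,
          (∑ i ∈ Finset.range v, if i = j + k then a t i * a t j else 0) =
          (if j + k ∈ Finset.range v then a t (j + k) * a t j else 0) := by
        intro j _
        exact Finset.sum_ite_eq' (Finset.range v) (j + k) (fun i => a t i * a t j)
      rw [Finset.sum_congr rfl inner]
      rw [← Finset.sum_subset (Finset.range_subset_range.2 (Nat.sub_le v k))
        (fun x _ hx => by rw [if_neg]; simp only [Finset.mem_range] at *; omega)]
      refine Finset.sum_congr rfl fun j hj => ?_
      simp only [Finset.mem_range] at hj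
      rw [if_pos (Finset.mem_range.2 (by omega))]
      exact mul_comm _ _
    have A2 : ∑ q ∈ (Finset.range v) ×ˢ (Finset.range v),
        (if q.2 = q.1 + (v - k) then a t q.1 * a t q.2 else 0) = AF v (a t) (v - k) := by
      rw [Finset.sum_product]
      have inner : ∀ i ∈ Finset.range v,
          (∑ j ∈ Finset.range v, if j = i + (v - k) then a t i * a t j else 0) =
          (if i + (v - k) ∈ Finset.range v then a t i * a t (i + (v - k)) else 0) := by
        intro i _
        exact Finset.sum_ite_eq' (Finset.range v) (i + (v - k)) (fun j => a t i * a t j)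
      rw [Finset.sum_congr rfl inner]
      have hvk : v - (v - k) = k := by omega
      rw [AF, hvk]
      rw [← Finset.sum_subset (Finset.range_subset_range.2 (by omega : k ≤ v))
        (fun x _ hx => by rw [if_neg]; simp only [Finset.mem_range] at *; omega)]
      refine Finset.sum_congr rfl fun i hi => ?_
      simp only [Finset.mem_range] at hi
      rw [if_pos (Finset.mem_range.2 (by omega))]
    rw [A1, A2, NAF]
  have hsum : ∑ t : Fin s, NAF v (a t) k =
      ((diffCount v s (fun t => Phi v (a t)) ((k : ℕ) : ZMod (2*v)) : ℤ) -
       (diffCount v s (fun t => Phi v (a t)) ((k + v : ℕ) : ZMod (2*v)) : ℤ)) := by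
    unfold diffCount
    simp only [Nat.cast_sum, Nat.cast_ite, Nat.cast_one, Nat.cast_zero]
    rw [← Finset.sum_sub_distrib]
    exact Finset.sum_congr rfl fun t _ => (hper t).symm
  rw [hsum, hm1, hm2, sub_self]
end

section
/- If (a,b) is a negaperiodic Golay pair of length v, then X = Φ_v(a) and Y = Φ_v(b) form a relative difference family in Z_{2v} with forbidden subgroup {0,v} and parameter λ = v. -/
/-- The number of representations of `m` as a difference of two elements within `X`
or within `Y`. -/
def diffCount2 (v : ℕ) (X Y : Finset (ZMod (2 * v))) (m : ZMod (2 * v)) : ℕ :=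
  ((X ×ˢ X).filter (fun p => p.1 - p.2 = m)).card +
  ((Y ×ˢ Y).filter (fun p => p.1 - p.2 = m)).card

namespace NgpairAux

open Finset

def nn (v : ℕ) (a : ℕ → ℤ) (i : ℕ) : ℕ := if a i = 1 then i else v + i

lemma nn_lt (v : ℕ) (a : ℕ → ℤ) (i : ℕ) (h : i < v) : nn v a i < 2 * v := by
  unfold nn; split <;> omega

lemma nn_pos (v : ℕ) (a : ℕ → ℤ) (i : ℕ) (h : a i = 1) : nn v a i = i := by
  simp [nn, h]

lemma nn_neg (v : ℕ) (a : ℕ → ℤ) (i : ℕ) (h : a i = -1) : nn v a i = v + i := by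
  simp only [nn, h]; norm_num

lemma mod_helper (M x y : ℕ) (hx : x < M) (hy : y < 2 * M) (h : x % M = y % M) :
    x = y ∨ x + M = y := by
  rcases Nat.lt_or_ge y M with h' | h'
  · left; rwa [Nat.mod_eq_of_lt hx, Nat.mod_eq_of_lt h'] at h
  · right
    have h2 : y % M = y - M := by
      rw [Nat.mod_eq_sub_mod h', Nat.mod_eq_of_lt (by omega)]
    rw [Nat.mod_eq_of_lt hx, h2] at h; omega

lemma diff_eq_iff (v : ℕ) (a : ℕ → ℤ) (i j t : ℕ) (hi : i < v) (hj : j < v)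
    (ht : t < 2 * v) :
    ((nn v a i : ZMod (2 * v)) - (nn v a j : ZMod (2 * v)) = (t : ZMod (2 * v))) ↔
      (nn v a i = nn v a j + t ∨ nn v a i + 2 * v = nn v a j + t) := by
  rw [sub_eq_iff_eq_add', ← Nat.cast_add, ZMod.natCast_eq_natCast_iff]
  constructor
  · intro h
    exact mod_helper (2 * v) _ _ (nn_lt v a i hi) (by have := nn_lt v a j hj; omega) h
  · rintro (h | h)
    · rw [h]
    · show nn v a i % (2 * v) = (nn v a j + t) % (2 * v)
      rw [← h, Nat.add_mod_right]

lemma count_inner (v : ℕ) (hv : 0 < v) (a : ℕ → ℤ)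
    (ha : ∀ i, i < v → a i = 1 ∨ a i = -1) (k : ℕ) (hk0 : 0 < k) (hkv : k < v) :
    (((range v ×ˢ range v)).filter
        (fun p => ((nn v a p.1 : ZMod (2 * v))) - (nn v a p.2 : ZMod (2 * v)) = (k : ZMod (2 * v)))).card
      = ((range (v - k)).filter (fun j => a j = a (j + k))).card
        + ((range k).filter (fun i => ¬ a i = a (i + (v - k)))).card := by
  have hset : ((range v ×ˢ range v)).filter
        (fun p => ((nn v a p.1 : ZMod (2 * v))) - (nn v a p.2 : ZMod (2 * v)) = (k : ZMod (2 * v)))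
      = (((range (v - k)).filter (fun j => a j = a (j + k))).image (fun j => (j + k, j)))
        ∪ (((range k).filter (fun i => ¬ a i = a (i + (v - k)))).image (fun i => (i, i + (v - k)))) := by
    ext ⟨i, j⟩
    simp only [mem_filter, mem_product, mem_range, mem_union, mem_image, Prod.mk.injEq]
    constructor
    · rintro ⟨⟨hi, hj⟩, hd⟩
      rw [diff_eq_iff v a i j k hi hj (by omega)] at hd
      rcases ha i hi with hai | hai <;> rcases ha j hj with haj | haj
      · rw [nn_pos v a i hai, nn_pos v a j haj] at hd
        left
        have hji : j + k = i := by omega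
        exact ⟨j, ⟨by omega, by rw [hji, hai, haj]⟩, hji, rfl⟩
      · rw [nn_pos v a i hai, nn_neg v a j haj] at hd
        right
        have hji : i + (v - k) = j := by omega
        refine ⟨i, ⟨by omega, ?_⟩, rfl, hji⟩
        rw [hji, hai, haj]; norm_num
      · rw [nn_neg v a i hai, nn_pos v a j haj] at hd
        right
        have hji : i + (v - k) = j := by omega
        refine ⟨i, ⟨by omega, ?_⟩, rfl, hji⟩
        rw [hji, hai, haj]; norm_num
      · rw [nn_neg v a i hai, nn_neg v a j haj] at hd
        left
        have hji : j + k = i := by omega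
        exact ⟨j, ⟨by omega, by rw [hji, hai, haj]⟩, hji, rfl⟩
    · rintro (⟨x, ⟨hx, hax⟩, rfl, rfl⟩ | ⟨x, ⟨hx, hax⟩, rfl, rfl⟩)
      · refine ⟨⟨by omega, by omega⟩, ?_⟩
        rw [diff_eq_iff v a _ _ k (by omega) (by omega) (by omega)]
        rcases ha x (by omega) with h | h
        · left; rw [nn_pos v a x h, nn_pos v a (x + k) (hax ▸ h)]
        · left
          rw [nn_neg v a x h, nn_neg v a (x + k) (hax ▸ h)]; omega
      · refine ⟨⟨by omega, by omega⟩, ?_⟩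
        rw [diff_eq_iff v a _ _ k (by omega) (by omega) (by omega)]
        rcases ha x (by omega) with h | h <;> rcases ha (x + (v - k)) (by omega) with h2 | h2
        · exact absurd (h.trans h2.symm) hax
        · right; rw [nn_pos v a x h, nn_neg v a (x + (v - k)) h2]; omega
        · left; rw [nn_neg v a x h, nn_pos v a (x + (v - k)) h2]; omega
        · exact absurd (h.trans h2.symm) hax
  have hdisj : Disjoint
      (((range (v - k)).filter (fun j => a j = a (j + k))).image (fun j => (j + k, j)))
      (((range k).filter (fun i => ¬ a i = a (i + (v - k)))).image (fun i => (i, i + (v - k)))) := by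
    rw [disjoint_left]
    rintro ⟨i, j⟩ h1 h2
    simp only [mem_image, mem_filter, mem_range, Prod.mk.injEq] at h1 h2
    obtain ⟨x, _, hx1, hx2⟩ := h1
    obtain ⟨y, ⟨hy, _⟩, hy1, hy2⟩ := h2
    omega
  rw [hset, card_union_of_disjoint hdisj,
    card_image_of_injective _ (fun x y h => by simpa using congrArg Prod.snd h),
    card_image_of_injective _ (fun x y h => by simpa using congrArg Prod.fst h)]

lemma count_inner_v (v : ℕ) (hv : 0 < v) (a : ℕ → ℤ)
    (ha : ∀ i, i < v → a i = 1 ∨ a i = -1) :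
    (((range v ×ˢ range v)).filter
        (fun p => ((nn v a p.1 : ZMod (2 * v))) - (nn v a p.2 : ZMod (2 * v)) = (v : ZMod (2 * v)))).card
      = 0 := by
  rw [Finset.card_eq_zero, Finset.filter_eq_empty_iff]
  rintro ⟨i, j⟩ hij
  simp only [mem_product, mem_range] at hij
  obtain ⟨hi, hj⟩ := hij
  rw [diff_eq_iff v a i j v hi hj (by omega)]
  rcases ha i hi with hai | hai <;> rcases ha j hj with haj | haj
  · rw [nn_pos v a i hai, nn_pos v a j haj]; omega
  · rw [nn_pos v a i hai, nn_neg v a j haj]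
    rintro (h | h)
    · omega
    · have : i = j := by omega
      rw [this, haj] at hai; norm_num at hai
  · rw [nn_neg v a i hai, nn_pos v a j haj]
    rintro (h | h)
    · have : i = j := by omega
      rw [this, haj] at hai; norm_num at hai
    · omega
  · rw [nn_neg v a i hai, nn_neg v a j haj]; omega

lemma Phi_eq (v : ℕ) (a : ℕ → ℤ) :
    Phi v a = (range v).image (fun i => ((nn v a i : ℕ) : ZMod (2 * v))) := by
  unfold Phi nn
  congr 1; funext i
  exact (apply_ite (fun x : ℕ => (x : ZMod (2 * v))) _ _ _).symm

lemma nn_inj (v : ℕ) (hv : 0 < v) (a : ℕ → ℤ) (i j : ℕ) (hi : i < v) (hj : j < v)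
    (h : ((nn v a i : ℕ) : ZMod (2 * v)) = ((nn v a j : ℕ) : ZMod (2 * v))) : i = j := by
  haveI : NeZero (2 * v) := ⟨by omega⟩
  have h2 : nn v a i = nn v a j := by
    have := congrArg ZMod.val h
    rwa [ZMod.val_natCast_of_lt (nn_lt v a i hi), ZMod.val_natCast_of_lt (nn_lt v a j hj)] at this
  unfold nn at h2; split_ifs at h2 <;> omega

lemma count_Phi (v : ℕ) (hv : 0 < v) (a : ℕ → ℤ) (m : ZMod (2 * v)) :
    (((Phi v a ×ˢ Phi v a)).filter (fun p => p.1 - p.2 = m)).card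
      = (((range v ×ˢ range v)).filter
          (fun p => ((nn v a p.1 : ZMod (2 * v))) - (nn v a p.2 : ZMod (2 * v)) = m)).card := by
  symm
  apply Finset.card_bij (fun p _ => (((nn v a p.1 : ℕ) : ZMod (2 * v)), ((nn v a p.2 : ℕ) : ZMod (2 * v))))
  · rintro ⟨i, j⟩ h
    simp only [mem_filter, mem_product, mem_range] at h ⊢
    rw [Phi_eq]
    exact ⟨⟨mem_image_of_mem _ (mem_range.2 h.1.1), mem_image_of_mem _ (mem_range.2 h.1.2)⟩, h.2⟩
  · rintro ⟨i, j⟩ h1 ⟨i', j'⟩ h2 h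
    simp only [mem_filter, mem_product, mem_range] at h1 h2
    simp only [Prod.mk.injEq] at h ⊢
    exact ⟨nn_inj v hv a i i' h1.1.1 h2.1.1 h.1, nn_inj v hv a j j' h1.1.2 h2.1.2 h.2⟩
  · rintro ⟨x, y⟩ h
    simp only [mem_filter, mem_product] at h
    obtain ⟨⟨hx, hy⟩, hd⟩ := h
    rw [Phi_eq] at hx hy
    obtain ⟨i, hi, hix⟩ := mem_image.1 hx
    obtain ⟨j, hj, hjy⟩ := mem_image.1 hy
    refine ⟨(i, j), ?_, by rw [hix, hjy]⟩
    simp only [mem_filter, mem_product, mem_range]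
    exact ⟨⟨mem_range.1 hi, mem_range.1 hj⟩, by rw [hix, hjy]; exact hd⟩

lemma count_neg (v : ℕ) (X : Finset (ZMod (2 * v))) (m : ZMod (2 * v)) :
    ((X ×ˢ X).filter (fun p => p.1 - p.2 = m)).card
      = ((X ×ˢ X).filter (fun p => p.1 - p.2 = -m)).card := by
  apply Finset.card_bij (fun p _ => (p.2, p.1))
  · rintro ⟨x, y⟩ h
    simp only [mem_filter, mem_product] at h ⊢
    exact ⟨⟨h.1.2, h.1.1⟩, by rw [← h.2]; ring⟩
  · rintro ⟨x, y⟩ _ ⟨x', y'⟩ _ h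
    simpa [Prod.ext_iff, and_comm] using h
  · rintro ⟨x, y⟩ h
    simp only [mem_filter, mem_product] at h
    refine ⟨(y, x), ?_, rfl⟩
    simp only [mem_filter, mem_product]
    exact ⟨⟨h.1.2, h.1.1⟩, by rw [← neg_neg (y - x), show -(y-x) = x - y by ring, h.2, neg_neg]⟩

lemma sum_pm (n s : ℕ) (a : ℕ → ℤ) (h1 : ∀ i, i < n → a i = 1 ∨ a i = -1)
    (h2 : ∀ i, i < n → a (i + s) = 1 ∨ a (i + s) = -1) :
    ∑ i ∈ range n, a i * a (i + s)
      = 2 * (((range n).filter (fun i => a i = a (i + s))).card : ℤ) - n := by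
  have key : ∀ i ∈ range n, a i * a (i + s) = if a i = a (i + s) then 1 else -1 := by
    intro i hi
    rw [mem_range] at hi
    rcases h1 i hi with h | h <;> rcases h2 i hi with h' | h' <;> simp [h, h']
  rw [Finset.sum_congr rfl key, Finset.sum_ite, Finset.sum_const, Finset.sum_const]
  have hc := Finset.card_filter_add_card_filter_not (s := range n)
    (p := fun i => a i = a (i + s))
  rw [card_range] at hc
  simp only [nsmul_eq_mul, mul_one, mul_neg_one]
  omega

lemma two_count (v : ℕ) (hv : 0 < v) (a : ℕ → ℤ)
    (ha : ∀ i, i < v → a i = 1 ∨ a i = -1) (k : ℕ) (hk0 : 0 < k) (hkv : k < v) :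
    2 * ((((range (v - k)).filter (fun j => a j = a (j + k))).card
        + ((range k).filter (fun i => ¬ a i = a (i + (v - k)))).card : ℕ) : ℤ)
      = v + NAF v a k := by
  have e1 : AF v a k
      = 2 * (((range (v - k)).filter (fun j => a j = a (j + k))).card : ℤ) - (v - k : ℕ) := by
    exact sum_pm (v - k) k a (fun i hi => ha i (by omega)) (fun i hi => ha (i + k) (by omega))
  have e2 : AF v a (v - k)
      = 2 * (((range k).filter (fun i => a i = a (i + (v - k)))).card : ℤ) - (k : ℕ) := by
    unfold AF
    rw [show v - (v - k) = k by omega]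
    exact sum_pm k (v - k) a (fun i hi => ha i (by omega)) (fun i hi => ha (i + (v - k)) (by omega))
  have hc := Finset.card_filter_add_card_filter_not (s := range k)
    (p := fun i => a i = a (i + (v - k)))
  rw [card_range] at hc
  unfold NAF
  rw [e1, e2]
  push_cast
  omega

end NgpairAux

open NgpairAux Finset in
/-- the `Φ_v`-images of a negaperiodic Golay pair of length `v` form a
relative difference family in `Z_{2v}` (relative to `{0, v}`) with parameter `λ = v`. -/
theorem ngpair_gives_rdf (v : ℕ) (hv : 0 < v) (a b : ℕ → ℤ)
    (ha : ∀ i, i < v → a i = 1 ∨ a i = -1)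
    (hb : ∀ i, i < v → b i = 1 ∨ b i = -1)
    (hng : ∀ k, 0 < k → k < v → NAF v a k + NAF v b k = 0) :
    (∀ m : ZMod (2 * v), m ≠ 0 → m ≠ ((v : ℕ) : ZMod (2 * v)) →
        diffCount2 v (Phi v a) (Phi v b) m = v) ∧
    diffCount2 v (Phi v a) (Phi v b) ((v : ℕ) : ZMod (2 * v)) = 0 := by
  haveI : NeZero (2 * v) := ⟨by omega⟩
  have key : ∀ k, 0 < k → k < v →
      diffCount2 v (Phi v a) (Phi v b) ((k : ℕ) : ZMod (2 * v)) = v := by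
    intro k hk0 hkv
    unfold diffCount2
    rw [count_Phi v hv a, count_Phi v hv b, count_inner v hv a ha k hk0 hkv,
      count_inner v hv b hb k hk0 hkv]
    have h2a := two_count v hv a ha k hk0 hkv
    have h2b := two_count v hv b hb k hk0 hkv
    have hn := hng k hk0 hkv
    omega
  constructor
  · intro m hm0 hmv
    have htlt : m.val < 2 * v := ZMod.val_lt m
    have hmt : ((m.val : ℕ) : ZMod (2 * v)) = m := by
      simp [ZMod.natCast_val, ZMod.cast_id]
    have ht0 : m.val ≠ 0 := by
      intro h
      exact hm0 (by rw [← hmt, h]; simp)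
    have htv : m.val ≠ v := fun h => hmv (by rw [← hmt, h])
    rcases Nat.lt_or_ge m.val v with hlt | hge
    · rw [← hmt]; exact key m.val (by omega) hlt
    · have hmk : ((2 * v - m.val : ℕ) : ZMod (2 * v)) = -m := by
        have hz : ((2 * v - m.val : ℕ) : ZMod (2 * v)) + ((m.val : ℕ) : ZMod (2 * v)) = 0 := by
          rw [← Nat.cast_add, show 2 * v - m.val + m.val = 2 * v by omega]
          exact ZMod.natCast_self _
        rw [hmt] at hz
        exact eq_neg_of_add_eq_zero_left hz
      unfold diffCount2
      rw [count_neg v (Phi v a) m, count_neg v (Phi v b) m, ← hmk]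
      exact key (2 * v - m.val) (by omega) (by omega)
  · unfold diffCount2
    rw [count_Phi v hv a, count_Phi v hv b, count_inner_v v hv a ha, count_inner_v v hv b hb]
end

section
/- If a negaperiodic Golay pair of length v > 1 exists, then v is even. -/
/-- A product of `±1`s is `±1`. -/
lemma prod_pm_one (t : ℕ → ℤ) (n : ℕ) (ht : ∀ i, i < n → t i = 1 ∨ t i = -1) :
    (∏ i ∈ Finset.range n, t i) = 1 ∨ (∏ i ∈ Finset.range n, t i) = -1 := by
  induction n with
  | zero => simp
  | succ n ih =>
    rw [Finset.prod_range_succ]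
    rcases ih (fun i hi => ht i (by omega)) with h | h <;>
      rcases ht n (by omega) with h' | h' <;> simp [h, h']

/-- Key parity lemma: for a `±1` sequence, `∑ t - ∏ t ≡ n - 1 (mod 4)`. -/
lemma sum_sub_prod_mod_four (t : ℕ → ℤ) (n : ℕ) (ht : ∀ i, i < n → t i = 1 ∨ t i = -1) :
    (4 : ℤ) ∣ (∑ i ∈ Finset.range n, t i) - (∏ i ∈ Finset.range n, t i) - ((n : ℤ) - 1) := by
  induction n with
  | zero => simp
  | succ n ih =>
    have ih' := ih (fun i hi => ht i (by omega))
    have hp := prod_pm_one t n (fun i hi => ht i (by omega))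
    rw [Finset.sum_range_succ, Finset.prod_range_succ]
    push_cast
    rcases ht n (by omega) with h | h <;> rcases hp with h' | h' <;>
      rw [h, h'] <;> omega

/-- Telescoping product of consecutive pair products. -/
lemma prod_pairs (a : ℕ → ℤ) (n : ℕ) (ha : ∀ i, i ≤ n → a i = 1 ∨ a i = -1) :
    (∏ i ∈ Finset.range n, (a i * a (i + 1))) = a 0 * a n := by
  induction n with
  | zero =>
    rcases ha 0 (le_refl 0) with h | h <;> simp [h]
  | succ n ih =>
    rw [Finset.prod_range_succ, ih (fun i hi => ha i (by omega))]
    rcases ha n (by omega) with h | h <;> rw [h] <;> ring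

/-- `NAF v a 1` written via pair products. -/
lemma NAF_one (v : ℕ) (hv : 1 < v) (a : ℕ → ℤ) :
    NAF v a 1 = (∑ i ∈ Finset.range (v - 1), a i * a (i + 1)) - a 0 * a (v - 1) := by
  unfold NAF AF
  have h1 : v - (v - 1) = 1 := by omega
  rw [h1, Finset.sum_range_one]
  simp

/-- if a negaperiodic Golay pair of length `v > 1` exists, then `v` is even. -/
theorem ngpair_length_even (v : ℕ) (hv : 1 < v) (a b : ℕ → ℤ)
    (ha : ∀ i, i < v → a i = 1 ∨ a i = -1)
    (hb : ∀ i, i < v → b i = 1 ∨ b i = -1)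
    (hng : ∀ k, 0 < k → k < v → NAF v a k + NAF v b k = 0) :
    Even v := by
  have key : ∀ c : ℕ → ℤ, (∀ i, i < v → c i = 1 ∨ c i = -1) →
      (4 : ℤ) ∣ NAF v c 1 - (((v : ℤ) - 1) - 1) := by
    intro c hc
    have ht : ∀ i, i < v - 1 → c i * c (i + 1) = 1 ∨ c i * c (i + 1) = -1 := by
      intro i hi
      rcases hc i (by omega) with h | h <;> rcases hc (i + 1) (by omega) with h' | h' <;>
        simp [h, h']
    have hprod := prod_pairs c (v - 1) (fun i hi => hc i (by omega))
    have hmod := sum_sub_prod_mod_four (fun i => c i * c (i + 1)) (v - 1) ht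
    rw [hprod] at hmod
    rw [NAF_one v hv c]
    have hcast : ((v - 1 : ℕ) : ℤ) = (v : ℤ) - 1 := by
      push_cast [Nat.cast_sub (by omega : 1 ≤ v)]; ring
    rw [hcast] at hmod
    convert hmod using 2
  have h1 := key a ha
  have h2 := key b hb
  have h3 := hng 1 (by omega) hv
  have : (4 : ℤ) ∣ 2 * (v : ℤ) := by omega
  have : (2 : ℤ) ∣ (v : ℤ) := by omega
  have : (2 : ℕ) ∣ v := by exact_mod_cast this
  exact (even_iff_two_dvd).mpr this
end

section
/- Let (a,b) ∈ GP_g be a Golay pair and (c,d) ∈ NGP_v a negaperiodic Golay pair. Define polynomials e(z), f(z) by e(z) = ½(a(z)+b(z))c(z^g) + ½(a(z)-b(z))d(z^{-g})z^{gv-g} and f(z) = ½(b(z)-a(z))c(z^{-g})z^{gv-g} + ½(a(z)+b(z))d(z^g), where each sequence is identified with its generating polynomial. Then the coefficient sequences (e,f) form a negaperiodic Golay pair of length gv. -/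
/-- Negaperiodic extension of a sequence of length `v`. -/
def negext (v : ℕ) (c : ℕ → ℤ) (q : ℕ) : ℤ := (-1)^(q / v) * c (q % v)

lemma negext_eq {v q : ℕ} (h : q < v) (c : ℕ → ℤ) : negext v c q = c q := by
  unfold negext
  rw [Nat.div_eq_of_lt h, Nat.mod_eq_of_lt h]
  ring

lemma negext_add (v : ℕ) (hv : 0 < v) (c : ℕ → ℤ) (q : ℕ) :
    negext v c (q + v) = - negext v c q := by
  unfold negext
  rw [Nat.add_div_right _ hv, Nat.add_mod_right]
  ring

lemma negext_congr' {v : ℕ} (hv : 0 < v) {x y : ℕ → ℤ} (h : ∀ q, q < v → x q = y q) (q : ℕ) :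
    negext v x q = negext v y q := by
  unfold negext
  rw [h _ (Nat.mod_lt _ hv)]

lemma corr_split' (v s : ℕ) (hv : 0 < v) (hs : s ≤ v) (x y : ℕ → ℤ) :
    ∑ q ∈ Finset.range v, negext v x q * negext v y (q + s)
      = (∑ q ∈ Finset.range (v - s), x q * y (q + s))
        - ∑ q ∈ Finset.range s, x (v - s + q) * y q := by
  rw [show Finset.range v = Finset.range ((v - s) + s) by rw [Nat.sub_add_cancel hs]]
  rw [Finset.sum_range_add, sub_eq_add_neg, ← Finset.sum_neg_distrib]
  congr 1
  · apply Finset.sum_congr rfl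
    intro q hq
    simp only [Finset.mem_range] at hq
    rw [negext_eq (by omega), negext_eq (by omega)]
  · apply Finset.sum_congr rfl
    intro q hq
    simp only [Finset.mem_range] at hq
    rw [negext_eq (by omega), show (v - s) + q + s = q + v by omega, negext_add v hv,
      negext_eq (by omega)]
    ring

lemma rev_corr' (v s : ℕ) (hv : 0 < v) (hs : s ≤ v) (x : ℕ → ℤ) :
    ∑ q ∈ Finset.range v, negext v (fun p => x (v - 1 - p)) q * negext v (fun p => x (v - 1 - p)) (q + s)
      = ∑ q ∈ Finset.range v, negext v x q * negext v x (q + s) := by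
  rw [corr_split' v s hv hs, corr_split' v s hv hs]
  congr 1
  · rw [← Finset.sum_range_reflect (fun j => x j * x (j + s)) (v - s)]
    apply Finset.sum_congr rfl
    intro q hq
    simp only [Finset.mem_range] at hq
    rw [show (v - s) - 1 - q = v - 1 - (q + s) by omega, show v - 1 - (q + s) + s = v - 1 - q by omega]
    ring
  · rw [← Finset.sum_range_reflect (fun j => x (v - s + j) * x j) s]
    apply Finset.sum_congr rfl
    intro q hq
    simp only [Finset.mem_range] at hq
    rw [show s - 1 - q = v - 1 - (v - s + q) by omega, show v - s + (v - 1 - (v - s + q)) = v - 1 - q by omega]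
    ring

lemma cross_corr2 (v s : ℕ) (hv : 0 < v) (hs : s ≤ v) (x y : ℕ → ℤ) :
    ∑ q ∈ Finset.range v, negext v x q * negext v (fun p => y (v - 1 - p)) (q + s)
      = ∑ q ∈ Finset.range v, negext v y q * negext v (fun p => x (v - 1 - p)) (q + s) := by
  rw [corr_split' v s hv hs, corr_split' v s hv hs]
  congr 1
  · rw [← Finset.sum_range_reflect (fun j => y j * x (v - 1 - (j + s))) (v - s)]
    apply Finset.sum_congr rfl
    intro q hq
    simp only [Finset.mem_range] at hq
    rw [show (v - s) - 1 - q = v - 1 - (q + s) by omega,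
      show v - 1 - (v - 1 - (q + s) + s) = q by omega]
    ring
  · rw [← Finset.sum_range_reflect (fun j => y (v - s + j) * x (v - 1 - j)) s]
    apply Finset.sum_congr rfl
    intro q hq
    simp only [Finset.mem_range] at hq
    rw [show s - 1 - q = v - 1 - (v - s + q) by omega,
      show v - s + (v - 1 - (v - s + q)) = v - 1 - q by omega,
      show v - 1 - (v - 1 - (v - s + q)) = v - s + q by omega]
    ring

lemma cross_corr3 (v s : ℕ) (hv : 0 < v) (hs : s ≤ v) (x y : ℕ → ℤ) :
    ∑ q ∈ Finset.range v, negext v (fun p => y (v - 1 - p)) q * negext v x (q + s)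
      = ∑ q ∈ Finset.range v, negext v (fun p => x (v - 1 - p)) q * negext v y (q + s) := by
  have h := cross_corr2 v s hv hs (fun p => y (v - 1 - p)) (fun p => x (v - 1 - p))
  calc ∑ q ∈ Finset.range v, negext v (fun p => y (v - 1 - p)) q * negext v x (q + s)
      = ∑ q ∈ Finset.range v, negext v (fun p => y (v - 1 - p)) q
          * negext v (fun p => x (v - 1 - (v - 1 - p))) (q + s) := by
        apply Finset.sum_congr rfl
        intro q _
        rw [negext_congr' hv (x := x) (y := fun p => x (v - 1 - (v - 1 - p)))
          (fun p hp => by show x p = x (v - 1 - (v - 1 - p)); congr 1; omega) (q + s)]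
    _ = ∑ q ∈ Finset.range v, negext v (fun p => x (v - 1 - p)) q
          * negext v (fun p => y (v - 1 - (v - 1 - p))) (q + s) := h
    _ = ∑ q ∈ Finset.range v, negext v (fun p => x (v - 1 - p)) q * negext v y (q + s) := by
        apply Finset.sum_congr rfl
        intro q _
        rw [negext_congr' hv (x := fun p => y (v - 1 - (v - 1 - p))) (y := y)
          (fun p hp => by show y (v - 1 - (v - 1 - p)) = y p; congr 1; omega) (q + s)]

lemma ncorr_eq_NAF (v s : ℕ) (hv : 0 < v) (hs : s ≤ v) (x : ℕ → ℤ) :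
    ∑ q ∈ Finset.range v, negext v x q * negext v x (q + s) = NAF v x s := by
  rw [corr_split' v s hv hs, NAF, AF, AF]
  congr 1
  rw [show v - (v - s) = s by omega]
  apply Finset.sum_congr rfl
  intro q _
  rw [show q + (v - s) = v - s + q by omega]
  ring

lemma tp_inner_sum (v s : ℕ) (hv : 0 < v) (hs : s ≤ v) (c d : ℕ → ℤ) (P M P' M' : ℤ) :
    ∑ q ∈ Finset.range v,
      ((P * negext v c q + M * negext v (fun p => d (v - 1 - p)) q) *
       (P' * negext v c (q + s) + M' * negext v (fun p => d (v - 1 - p)) (q + s)) +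
       (-M * negext v (fun p => c (v - 1 - p)) q + P * negext v d q) *
       (-M' * negext v (fun p => c (v - 1 - p)) (q + s) + P' * negext v d (q + s)))
    = (P * P' + M * M') *
      ∑ q ∈ Finset.range v, (negext v c q * negext v c (q + s) + negext v d q * negext v d (q + s)) := by
  have key : ∀ q ∈ Finset.range v,
      ((P * negext v c q + M * negext v (fun p => d (v - 1 - p)) q) *
       (P' * negext v c (q + s) + M' * negext v (fun p => d (v - 1 - p)) (q + s)) +
       (-M * negext v (fun p => c (v - 1 - p)) q + P * negext v d q) *
       (-M' * negext v (fun p => c (v - 1 - p)) (q + s) + P' * negext v d (q + s)))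
      = P * P' * (negext v c q * negext v c (q + s) + negext v d q * negext v d (q + s))
        + M * M' * (negext v (fun p => c (v - 1 - p)) q * negext v (fun p => c (v - 1 - p)) (q + s)
            + negext v (fun p => d (v - 1 - p)) q * negext v (fun p => d (v - 1 - p)) (q + s))
        + P * M' * (negext v c q * negext v (fun p => d (v - 1 - p)) (q + s)
            - negext v d q * negext v (fun p => c (v - 1 - p)) (q + s))
        + M * P' * (negext v (fun p => d (v - 1 - p)) q * negext v c (q + s)
            - negext v (fun p => c (v - 1 - p)) q * negext v d (q + s)) := by
    intro q _
    ring
  rw [Finset.sum_congr rfl key]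
  simp only [Finset.sum_add_distrib, Finset.sum_sub_distrib, ← Finset.mul_sum]
  rw [rev_corr' v s hv hs c, rev_corr' v s hv hs d, cross_corr2 v s hv hs c d,
    cross_corr3 v s hv hs c d]
  ring

lemma tp_sum_grid (g v : ℕ) (H : ℕ → ℤ) :
    ∑ i ∈ Finset.range (g * v), H i = ∑ q ∈ Finset.range v, ∑ r ∈ Finset.range g, H (q * g + r) := by
  induction v with
  | zero => simp
  | succ n ih =>
    rw [Finset.sum_range_succ, ← ih, show g * (n + 1) = g * n + g by ring, Finset.sum_range_add]
    congr 1
    apply Finset.sum_congr rfl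
    intro r _
    congr 1
    ring

lemma tp_naf_expand (n k : ℕ) (hk : 0 < k) (hkn : k < n) (x X : ℕ → ℤ)
    (h1 : ∀ i, i < n → X i = 2 * x i) (h2 : ∀ i, X (i + n) = - X i) :
    ∑ i ∈ Finset.range n, X i * X (i + k) = 4 * NAF n x k := by
  rw [show Finset.range n = Finset.range ((n - k) + k) by congr 1; omega, Finset.sum_range_add]
  unfold NAF AF
  have e1 : ∑ i ∈ Finset.range (n - k), X i * X (i + k)
      = 4 * ∑ i ∈ Finset.range (n - k), x i * x (i + k) := by
    rw [Finset.mul_sum]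
    apply Finset.sum_congr rfl
    intro i hi
    simp only [Finset.mem_range] at hi
    rw [h1 i (by omega), h1 (i + k) (by omega)]
    ring
  have e2 : ∑ i ∈ Finset.range k, X ((n - k) + i) * X ((n - k) + i + k)
      = -4 * ∑ i ∈ Finset.range (n - (n - k)), x i * x (i + (n - k)) := by
    rw [show n - (n - k) = k by omega, Finset.mul_sum]
    apply Finset.sum_congr rfl
    intro i hi
    simp only [Finset.mem_range] at hi
    rw [show (n - k) + i + k = i + n by omega, h2 i, h1 i (by omega),
      h1 ((n - k) + i) (by omega), show (n - k) + i = i + (n - k) by omega]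
    ring
  rw [e1, e2]
  ring

/-- the Turyn product of a Golay pair `(a,b)` of length `g` and a
negaperiodic Golay pair `(c,d)` of length `v` is a negaperiodic Golay pair `(e,f)` of
length `gv`.  The coefficient sequences of
`e(z) = ½(a(z)+b(z))c(z^g) + ½(a(z)-b(z))d(z^{-g})z^{gv-g}` and
`f(z) = ½(b(z)-a(z))c(z^{-g})z^{gv-g} + ½(a(z)+b(z))d(z^g)`
are given at index `i = q·g + r` (`r = i % g`, `q = i / g`) by
`2 e_i = (a_r+b_r)c_q + (a_r-b_r)d_{v-1-q}` and `2 f_i = (b_r-a_r)c_{v-1-q} + (a_r+b_r)d_q`. -/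
theorem turyn_product_ngpair (g v : ℕ) (hg : 0 < g) (hv : 0 < v)
    (a b c d e f : ℕ → ℤ)
    (hab : ∀ i, i < g → (a i = 1 ∨ a i = -1) ∧ (b i = 1 ∨ b i = -1))
    (hgolay : ∀ k, 0 < k → k < g → AF g a k + AF g b k = 0)
    (hcd : ∀ i, i < v → (c i = 1 ∨ c i = -1) ∧ (d i = 1 ∨ d i = -1))
    (hng : ∀ k, 0 < k → k < v → NAF v c k + NAF v d k = 0)
    (he : ∀ i, i < g * v →
      2 * e i = (a (i % g) + b (i % g)) * c (i / g) + (a (i % g) - b (i % g)) * d (v - 1 - i / g))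
    (hf : ∀ i, i < g * v →
      2 * f i = (b (i % g) - a (i % g)) * c (v - 1 - i / g) + (a (i % g) + b (i % g)) * d (i / g)) :
    (∀ i, i < g * v → e i = 1 ∨ e i = -1) ∧
    (∀ i, i < g * v → f i = 1 ∨ f i = -1) ∧
    (∀ k, 0 < k → k < g * v → NAF (g * v) e k + NAF (g * v) f k = 0) := by
  have hmod : ∀ i : ℕ, i % g < g := fun i => Nat.mod_lt _ hg
  have hdiv : ∀ i, i < g * v → i / g < v := fun i hi => Nat.div_lt_of_lt_mul hi
  have he1 : ∀ i, i < g * v → e i = 1 ∨ e i = -1 := by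
    intro i hi
    obtain ⟨ha1, hb1⟩ := hab (i % g) (hmod i)
    obtain ⟨hc1, -⟩ := hcd (i / g) (hdiv i hi)
    obtain ⟨-, hd1⟩ := hcd (v - 1 - i / g)
      (lt_of_le_of_lt (Nat.sub_le _ _) (Nat.sub_lt hv Nat.one_pos))
    have h2 := he i hi
    rcases ha1 with ha1 | ha1 <;> rcases hb1 with hb1 | hb1 <;> rcases hc1 with hc1 | hc1 <;>
      rcases hd1 with hd1 | hd1 <;> rw [ha1, hb1, hc1, hd1] at h2 <;> omega
  have hf1 : ∀ i, i < g * v → f i = 1 ∨ f i = -1 := by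
    intro i hi
    obtain ⟨ha1, hb1⟩ := hab (i % g) (hmod i)
    obtain ⟨-, hd1⟩ := hcd (i / g) (hdiv i hi)
    obtain ⟨hc1, -⟩ := hcd (v - 1 - i / g)
      (lt_of_le_of_lt (Nat.sub_le _ _) (Nat.sub_lt hv Nat.one_pos))
    have h2 := hf i hi
    rcases ha1 with ha1 | ha1 <;> rcases hb1 with hb1 | hb1 <;> rcases hc1 with hc1 | hc1 <;>
      rcases hd1 with hd1 | hd1 <;> rw [ha1, hb1, hc1, hd1] at h2 <;> omega
  refine ⟨he1, hf1, ?_⟩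
  intro k hk hkv
  set t := k % g with ht
  set s := k / g with hs
  have hts : g * s + t = k := Nat.div_add_mod k g
  have htg : t < g := hmod k
  have hsv : s < v := Nat.div_lt_of_lt_mul hkv
  set E : ℕ → ℤ := fun i => (a (i % g) + b (i % g)) * negext v c (i / g)
      + (a (i % g) - b (i % g)) * negext v (fun p => d (v - 1 - p)) (i / g) with hE
  set F : ℕ → ℤ := fun i => -(a (i % g) - b (i % g)) * negext v (fun p => c (v - 1 - p)) (i / g)
      + (a (i % g) + b (i % g)) * negext v d (i / g) with hF
  have hrevd : ∀ i, i < g * v → negext v (fun p => d (v - 1 - p)) (i / g) = d (v - 1 - i / g) := by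
    intro i hi
    rw [negext_eq (hdiv i hi)]
  have hrevc : ∀ i, i < g * v → negext v (fun p => c (v - 1 - p)) (i / g) = c (v - 1 - i / g) := by
    intro i hi
    rw [negext_eq (hdiv i hi)]
  have hEe : ∀ i, i < g * v → E i = 2 * e i := by
    intro i hi
    simp only [hE]
    rw [negext_eq (hdiv i hi), hrevd i hi]
    linarith [he i hi]
  have hFf : ∀ i, i < g * v → F i = 2 * f i := by
    intro i hi
    simp only [hF]
    rw [hrevc i hi, negext_eq (hdiv i hi)]
    linarith [hf i hi]
  have hEneg : ∀ i, E (i + g * v) = - E i := by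
    intro i
    simp only [hE]
    rw [Nat.add_mul_mod_self_left, Nat.add_mul_div_left _ _ hg, negext_add v hv,
      negext_add v hv]
    ring
  have hFneg : ∀ i, F (i + g * v) = - F i := by
    intro i
    simp only [hF]
    rw [Nat.add_mul_mod_self_left, Nat.add_mul_div_left _ _ hg, negext_add v hv,
      negext_add v hv]
    ring
  have hkey : 4 * (NAF (g * v) e k + NAF (g * v) f k)
      = ∑ i ∈ Finset.range (g * v), (E i * E (i + k) + F i * F (i + k)) := by
    rw [Finset.sum_add_distrib, tp_naf_expand (g * v) k hk hkv e E hEe hEneg,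
      tp_naf_expand (g * v) k hk hkv f F hFf hFneg]
    ring
  have idxmod : ∀ q r : ℕ, r < g → (q * g + r) % g = r := by
    intro q r hr
    rw [mul_comm, Nat.mul_add_mod, Nat.mod_eq_of_lt hr]
  have idxdiv : ∀ q r : ℕ, r < g → (q * g + r) / g = q := by
    intro q r hr
    rw [mul_comm, Nat.mul_add_div hg, Nat.div_eq_of_lt hr, Nat.add_zero]
  have hstep1 : ∀ r, r < g - t →
      ∑ q ∈ Finset.range v, (E (q * g + r) * E (q * g + r + k) + F (q * g + r) * F (q * g + r + k))
      = ((a r + b r) * (a (r + t) + b (r + t)) + (a r - b r) * (a (r + t) - b (r + t))) *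
        ∑ q ∈ Finset.range v, (negext v c q * negext v c (q + s) + negext v d q * negext v d (q + s)) := by
    intro r hr
    rw [← tp_inner_sum v s hv hsv.le c d (a r + b r) (a r - b r) (a (r + t) + b (r + t))
      (a (r + t) - b (r + t))]
    apply Finset.sum_congr rfl
    intro q _
    rw [show q * g + r + k = (q + s) * g + (r + t) by
      rw [add_mul, mul_comm s g]; omega]
    simp only [hE, hF]
    rw [idxmod q r (by omega), idxdiv q r (by omega), idxmod (q + s) (r + t) (by omega),
      idxdiv (q + s) (r + t) (by omega)]
  have hstep2 : ∀ j, j < t →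
      ∑ q ∈ Finset.range v, (E (q * g + (g - t + j)) * E (q * g + (g - t + j) + k)
        + F (q * g + (g - t + j)) * F (q * g + (g - t + j) + k))
      = ((a (g - t + j) + b (g - t + j)) * (a j + b j)
          + (a (g - t + j) - b (g - t + j)) * (a j - b j)) *
        ∑ q ∈ Finset.range v,
          (negext v c q * negext v c (q + (s + 1)) + negext v d q * negext v d (q + (s + 1))) := by
    intro j hj
    rw [← tp_inner_sum v (s + 1) hv (by omega) c d (a (g - t + j) + b (g - t + j))
      (a (g - t + j) - b (g - t + j)) (a j + b j) (a j - b j)]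
    apply Finset.sum_congr rfl
    intro q _
    rw [show q * g + (g - t + j) + k = (q + (s + 1)) * g + j by
      rw [add_mul, add_mul, one_mul, mul_comm s g]; omega]
    simp only [hE, hF]
    rw [idxmod q (g - t + j) (by omega), idxdiv q (g - t + j) (by omega),
      idxmod (q + (s + 1)) j (by omega), idxdiv (q + (s + 1)) j (by omega)]
  have hsum : ∑ i ∈ Finset.range (g * v), (E i * E (i + k) + F i * F (i + k))
      = 2 * (AF g a t + AF g b t) *
        (∑ q ∈ Finset.range v, (negext v c q * negext v c (q + s) + negext v d q * negext v d (q + s)))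
      + 2 * (AF g a (g - t) + AF g b (g - t)) *
        (∑ q ∈ Finset.range v,
          (negext v c q * negext v c (q + (s + 1)) + negext v d q * negext v d (q + (s + 1)))) := by
    rw [tp_sum_grid g v, Finset.sum_comm,
      show Finset.range g = Finset.range ((g - t) + t) by congr 1; omega,
      Finset.sum_range_add]
    congr 1
    · rw [Finset.sum_congr rfl (fun r hr => hstep1 r (Finset.mem_range.mp hr)), ← Finset.sum_mul]
      congr 1
      unfold AF
      rw [← Finset.sum_add_distrib, Finset.mul_sum]
      apply Finset.sum_congr rfl
      intro r _
      ring
    · rw [Finset.sum_congr rfl (fun j hj => hstep2 j (Finset.mem_range.mp hj)), ← Finset.sum_mul]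
      congr 1
      unfold AF
      rw [show g - (g - t) = t by omega, ← Finset.sum_add_distrib, Finset.mul_sum]
      apply Finset.sum_congr rfl
      intro j hj
      simp only [Finset.mem_range] at hj
      rw [show j + (g - t) = g - t + j by omega]
      ring
  rcases Nat.eq_zero_or_pos t with ht0 | ht0
  · -- t = 0 : use negaperiodic Golay property at shift s
    have hs0 : 0 < s := by
      rcases Nat.eq_zero_or_pos s with h | h
      · rw [h, Nat.mul_zero, Nat.zero_add] at hts
        omega
      · exact h
    have hN1 : ∑ q ∈ Finset.range v,
        (negext v c q * negext v c (q + s) + negext v d q * negext v d (q + s)) = 0 := by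
      rw [Finset.sum_add_distrib, ncorr_eq_NAF v s hv hsv.le c, ncorr_eq_NAF v s hv hsv.le d]
      exact hng s hs0 hsv
    have hAFg : AF g a (g - t) + AF g b (g - t) = 0 := by
      rw [ht0]
      simp [AF]
    have h4 : 4 * (NAF (g * v) e k + NAF (g * v) f k) = 0 := by
      rw [hkey, hsum, hN1, hAFg]
      ring
    linarith
  · -- 0 < t < g : use Golay property
    have hA1 : AF g a t + AF g b t = 0 := hgolay t ht0 htg
    have hA2 : AF g a (g - t) + AF g b (g - t) = 0 := hgolay (g - t) (by omega) (by omega)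
    have h4 : 4 * (NAF (g * v) e k + NAF (g * v) f k) = 0 := by
      rw [hkey, hsum, hA1, hA2]
      ring
    linarith
end

section
/- Let a,b be integer sequences of lengths g and gv respectively, and suppose (a,b) is a Golay pair of length g and (c,d) is a negaperiodic complementary ternary pair of length v and total weight w (entries in {0,±1}). Then the Turyn product sequences (e,f), defined by e(z) = ½(a(z)+b(z))c(z^g) + ½(a(z)-b(z))d(z^{-g})z^{gv-g} and f(z) = ½(b(z)-a(z))c(z^{-g})z^{gv-g} + ½(a(z)+b(z))d(z^g), form a negaperiodic complementary ternary pair of length gv and weight gw; that is, e(z)e(z^{-1}) + f(z)f(z^{-1}) ≡ gw (mod z^{gv}+1). -/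
open Finset Polynomial

namespace Finset

theorem sum_triangle_eq_sum_diff {M : Type*} [AddCommMonoid M] (L : ℕ) (G : ℕ → ℕ → M) :
    ∑ i ∈ range L, ∑ j ∈ range i, G i j =
      ∑ k ∈ Ico 1 L, ∑ j ∈ range (L - k), G (j + k) j := by
  rw [sum_sigma', sum_sigma']
  refine sum_nbij' (fun p => ⟨p.1 - p.2, p.2⟩) (fun p => ⟨p.2 + p.1, p.2⟩)
      ?_ ?_ ?_ ?_ ?_ <;>
    simp only [mem_sigma, mem_range, mem_Ico, Sigma.forall, Sigma.mk.injEq, heq_eq_eq,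
      and_true] <;>
    intro i j hij
  all_goals first | omega | rw [Nat.add_sub_cancel' hij.2.le]

theorem sum_square_eq_sum_diag_add_sum_diff {M : Type*} [AddCommMonoid M] (L : ℕ)
    (F : ℕ → ℕ → M) :
    ∑ i ∈ range L, ∑ j ∈ range L, F i j =
      ∑ i ∈ range L, F i i +
        ∑ k ∈ Ico 1 L, ∑ j ∈ range (L - k), (F (j + k) j + F j (j + k)) := by
  have hrow : ∀ i ∈ range L, ∑ j ∈ range L, F i j =
      ∑ j ∈ range i, F i j + F i i + ∑ j ∈ Ico (i + 1) L, F i j := fun i hi => by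
    rw [← sum_range_succ, sum_range_add_sum_Ico _ (mem_range.mp hi)]
  have hupper : ∑ i ∈ range L, ∑ j ∈ Ico (i + 1) L, F i j =
      ∑ j ∈ range L, ∑ i ∈ range j, F i j := by
    simpa only [Nat.Ico_zero_eq_range] using sum_Ico_Ico_comm' 0 L F
  rw [sum_congr rfl hrow, sum_add_distrib, sum_add_distrib, hupper, sum_triangle_eq_sum_diff,
    sum_triangle_eq_sum_diff L (fun j i => F i j)]
  simp only [sum_add_distrib]
  abel

theorem sum_Ico_one_reflect {M : Type*} [AddCommMonoid M] (L : ℕ) (G : ℕ → ℕ → M) :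
    ∑ k ∈ Ico 1 L, G k (L - k) = ∑ k ∈ Ico 1 L, G (L - k) k := by
  refine sum_nbij' (L - ·) (L - ·) ?_ ?_ ?_ ?_ ?_ <;> intro k hk <;> simp only [mem_Ico] at hk ⊢
  all_goals first | omega | rw [Nat.sub_sub_self hk.2.le]

theorem sum_range_mul_eq_sum_range_sum_range {M : Type*} [AddCommMonoid M] (g v : ℕ)
    (G : ℕ → M) :
    ∑ i ∈ range (g * v), G i = ∑ q ∈ range v, ∑ r ∈ range g, G (g * q + r) := by
  induction v with
  | zero => simp
  | succ v ih => rw [Nat.mul_succ, sum_range_add, ih, sum_range_succ]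

end Finset

theorem AF_zero_eq_sum_sq (L : ℕ) (x : ℕ → ℤ) : AF L x 0 = ∑ i ∈ range L, x i ^ 2 := by
  simp only [AF, Nat.sub_zero, add_zero, sq]

theorem NAF_zero_eq_AF_zero (L : ℕ) (x : ℕ → ℤ) : NAF L x 0 = AF L x 0 := by
  simp [NAF, AF]

theorem AF_zero_of_forall_eq_one_or_neg_one {L : ℕ} {x : ℕ → ℤ}
    (hx : ∀ i < L, x i = 1 ∨ x i = -1) : AF L x 0 = L := by
  rw [AF_zero_eq_sum_sq, sum_congr rfl fun i hi => (hx i (mem_range.mp hi)).elim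
    (fun h => by rw [h, one_pow]) (fun h => by rw [h, neg_one_sq])]
  simp

structure IsGolayPair (g : ℕ) (a b : ℕ → ℤ) : Prop where
  eq_one_or_neg_one : ∀ i < g, (a i = 1 ∨ a i = -1) ∧ (b i = 1 ∨ b i = -1)
  AF_add_AF : ∀ k, 0 < k → k < g → AF g a k + AF g b k = 0

structure IsNegaComplementaryPair (v w : ℕ) (c d : ℕ → ℤ) : Prop where
  weight : ∑ i ∈ range v, (c i ^ 2 + d i ^ 2) = (w : ℤ)
  NAF_add_NAF : ∀ k, 0 < k → k < v → NAF v c k + NAF v d k = 0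

structure IsTurynProduct (g v : ℕ) (a b c d e f : ℕ → ℤ) : Prop where
  two_mul_e : ∀ i < g * v,
    2 * e i = (a (i % g) + b (i % g)) * c (i / g) + (a (i % g) - b (i % g)) * d (v - 1 - i / g)
  two_mul_f : ∀ i < g * v,
    2 * f i = (b (i % g) - a (i % g)) * c (v - 1 - i / g) + (a (i % g) + b (i % g)) * d (i / g)

section

variable {R : Type*} [CommRing R]

def seqEval (L : ℕ) (x : ℕ → ℤ) (u : R) : R :=
  ∑ i ∈ range L, (x i : R) * u ^ i

theorem seqEval_congr {L : ℕ} {x y : ℕ → ℤ} (h : ∀ i < L, x i = y i) (u : R) :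
    seqEval L x u = seqEval L y u :=
  sum_congr rfl fun i hi => by rw [h i (mem_range.mp hi)]

theorem seqEval_add (L : ℕ) (x y : ℕ → ℤ) (u : R) :
    seqEval L (fun i => x i + y i) u = seqEval L x u + seqEval L y u := by
  simp only [seqEval, Int.cast_add, add_mul, sum_add_distrib]

theorem seqEval_sub (L : ℕ) (x y : ℕ → ℤ) (u : R) :
    seqEval L (fun i => x i - y i) u = seqEval L x u - seqEval L y u := by
  simp only [seqEval, Int.cast_sub, sub_mul, sum_sub_distrib]

theorem seqEval_const_mul (L : ℕ) (n : ℤ) (x : ℕ → ℤ) (u : R) :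
    seqEval L (fun i => n * x i) u = n * seqEval L x u := by
  simp only [seqEval, Int.cast_mul, mul_sum, mul_assoc]

theorem seqEval_ite_zero {L : ℕ} (hL : 0 < L) (n : ℤ) (u : R) :
    seqEval L (fun i => if i = 0 then n else 0) u = n := by
  simp [seqEval, hL]

theorem seqEval_reflect (L : ℕ) (x : ℕ → ℤ) {u u' : R} (h : u * u' = 1) :
    seqEval L (fun i => x (L - 1 - i)) u = u ^ (L - 1) * seqEval L x u' := by
  rw [seqEval, seqEval, mul_sum,
    ← sum_range_reflect (fun i => u ^ (L - 1) * ((x i : R) * u' ^ i))]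
  refine sum_congr rfl fun i hi => ?_
  have hsplit : u ^ (L - 1) = u ^ i * u ^ (L - 1 - i) := by
    rw [← pow_add]; congr 1; have := mem_range.mp hi; omega
  rw [hsplit]
  linear_combination -(x (L - 1 - i) : R) * u ^ i * pow_mul_pow_eq_one (L - 1 - i) h

theorem seqEval_kronecker (g v : ℕ) (s p : ℕ → ℤ) (u : R) :
    seqEval (g * v) (fun i => s (i % g) * p (i / g)) u = seqEval g s u * seqEval v p (u ^ g) := by
  rw [seqEval, seqEval, seqEval, sum_mul_sum, sum_comm, sum_range_mul_eq_sum_range_sum_range]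
  refine sum_congr rfl fun q _ => sum_congr rfl fun r hr => ?_
  have hr : r < g := mem_range.mp hr
  rw [Nat.mul_add_mod, Nat.mod_eq_of_lt hr, Nat.mul_add_div (by omega), Nat.div_eq_of_lt hr,
    add_zero]
  push_cast
  ring

theorem seqEval_mul_seqEval_of_mul_eq_one (L : ℕ) (x : ℕ → ℤ) {u u' : R} (h : u * u' = 1) :
    seqEval L x u * seqEval L x u' =
      AF L x 0 + ∑ k ∈ Ico 1 L, (AF L x k : R) * (u ^ k + u' ^ k) := by
  have hinv (n : ℕ) := pow_mul_pow_eq_one n h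
  rw [seqEval, seqEval, sum_mul_sum, sum_square_eq_sum_diag_add_sum_diff]
  congr 1
  · rw [AF, Nat.sub_zero]
    push_cast
    refine sum_congr rfl fun i _ => ?_
    linear_combination (x i * x (i + 0) : R) * hinv i
  · refine sum_congr rfl fun k _ => ?_
    rw [AF, Int.cast_sum, sum_mul]
    refine sum_congr rfl fun j _ => ?_
    push_cast
    linear_combination (x j * x (j + k) : R) * (u ^ k + u' ^ k) * hinv j

theorem seqEval_mul_seqEval_of_pow_eq_neg_one (L : ℕ) (x : ℕ → ℤ) {u u' : R}
    (h : u * u' = 1) (hu : u ^ L = -1) :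
    seqEval L x u * seqEval L x u' = seqEval L (NAF L x) u := by
  rcases L.eq_zero_or_pos with rfl | hL
  · simp [seqEval]
  have hinv : ∀ k ∈ Ico 1 L, u' ^ k = -u ^ (L - k) := fun k hk => by
    have hsplit : u ^ k * u ^ (L - k) = -1 := by
      rw [← pow_add, Nat.add_sub_cancel' (mem_Ico.mp hk).2.le, hu]
    linear_combination (-u ^ (L - k)) * pow_mul_pow_eq_one k h + u' ^ k * hsplit
  rw [seqEval_mul_seqEval_of_mul_eq_one L x h, seqEval, sum_range_eq_add_Ico _ hL,
    NAF_zero_eq_AF_zero, pow_zero, mul_one]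
  congr 1
  calc ∑ k ∈ Ico 1 L, (AF L x k : R) * (u ^ k + u' ^ k)
      = ∑ k ∈ Ico 1 L, (AF L x k : R) * u ^ k -
          ∑ k ∈ Ico 1 L, (AF L x k : R) * u ^ (L - k) := by
        rw [← sum_sub_distrib]
        exact sum_congr rfl fun k hk => by rw [hinv k hk]; ring
    _ = ∑ k ∈ Ico 1 L, (NAF L x k : R) * u ^ k := by
        rw [sum_Ico_one_reflect L (fun k j => (AF L x k : R) * u ^ j), ← sum_sub_distrib]
        simp only [NAF, Int.cast_sub, sub_mul]

theorem IsGolayPair.seqEval_complementary {g : ℕ} {a b : ℕ → ℤ} (hab : IsGolayPair g a b)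
    {u u' : R} (h : u * u' = 1) :
    seqEval g a u * seqEval g a u' + seqEval g b u * seqEval g b u' = 2 * g := by
  have hoff : ∑ k ∈ Ico 1 g, (AF g a k : R) * (u ^ k + u' ^ k) +
      ∑ k ∈ Ico 1 g, (AF g b k : R) * (u ^ k + u' ^ k) = 0 := by
    rw [← sum_add_distrib]
    refine sum_eq_zero fun k hk => ?_
    rw [mem_Ico] at hk
    rw [← add_mul, ← Int.cast_add, hab.AF_add_AF k hk.1 hk.2, Int.cast_zero, zero_mul]
  rw [seqEval_mul_seqEval_of_mul_eq_one g a h, seqEval_mul_seqEval_of_mul_eq_one g b h,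
    AF_zero_of_forall_eq_one_or_neg_one fun i hi => (hab.eq_one_or_neg_one i hi).1,
    AF_zero_of_forall_eq_one_or_neg_one fun i hi => (hab.eq_one_or_neg_one i hi).2]
  push_cast
  linear_combination hoff

theorem IsNegaComplementaryPair.seqEval_complementary {v w : ℕ} {c d : ℕ → ℤ}
    (hcd : IsNegaComplementaryPair v w c d) (hv : 0 < v) {u u' : R} (h : u * u' = 1)
    (hu : u ^ v = -1) :
    seqEval v c u * seqEval v c u' + seqEval v d u * seqEval v d u' = w := by
  have hnaf : ∀ k < v, NAF v c k + NAF v d k = if k = 0 then (w : ℤ) else 0 := fun k hk => by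
    split_ifs with hk0
    · rw [hk0, NAF_zero_eq_AF_zero, NAF_zero_eq_AF_zero, AF_zero_eq_sum_sq, AF_zero_eq_sum_sq,
        ← sum_add_distrib, hcd.weight]
    · exact hcd.NAF_add_NAF k (Nat.pos_of_ne_zero hk0) hk
  rw [seqEval_mul_seqEval_of_pow_eq_neg_one v c h hu,
    seqEval_mul_seqEval_of_pow_eq_neg_one v d h hu, ← seqEval_add, seqEval_congr hnaf,
    seqEval_ite_zero hv, Int.cast_natCast]

theorem two_mul_seqEval_of_two_mul_eq {g v : ℕ} {x s t p q : ℕ → ℤ}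
    (hx : ∀ i < g * v, 2 * x i = s (i % g) * p (i / g) + t (i % g) * q (v - 1 - i / g)) (u : R) :
    2 * seqEval (g * v) x u =
      seqEval g s u * seqEval v p (u ^ g) +
        seqEval g t u * seqEval v (fun j => q (v - 1 - j)) (u ^ g) := by
  rw [← seqEval_kronecker, ← seqEval_kronecker, ← seqEval_add, ← Int.cast_two,
    ← seqEval_const_mul]
  exact seqEval_congr hx u

theorem turyn_identity {A A' B B' C C' D D' Y Y' : R} (h : Y * Y' = 1) :
    ((A + B) * C + (A - B) * (Y * D')) * ((A' + B') * C' + (A' - B') * (Y' * D)) +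
        ((A + B) * D + (B - A) * (Y * C')) * ((A' + B') * D' + (B' - A') * (Y' * C)) =
      2 * (A * A' + B * B') * (C * C' + D * D') := by
  linear_combination (A - B) * (A' - B') * (C * C' + D * D') * h

theorem IsTurynProduct.seqEval_complementary {g v w : ℕ} {a b c d e f : ℕ → ℤ}
    (hef : IsTurynProduct g v a b c d e f) (hab : IsGolayPair g a b)
    (hcd : IsNegaComplementaryPair v w c d) (hv : 0 < v) {z z' : R} (hzz' : z * z' = 1)
    (hz : z ^ (g * v) = -1) :
    4 * (seqEval (g * v) e z * seqEval (g * v) e z' + seqEval (g * v) f z * seqEval (g * v) f z') =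
      4 * (g * w) := by
  have hyy' := pow_mul_pow_eq_one g hzz'
  have hE := two_mul_seqEval_of_two_mul_eq (R := R) (s := fun r => a r + b r)
    (t := fun r => a r - b r) (p := c) (q := d) hef.two_mul_e
  have hF := two_mul_seqEval_of_two_mul_eq (R := R) (s := fun r => a r + b r)
    (t := fun r => b r - a r) (p := d) (q := c)
    fun i hi => (hef.two_mul_f i hi).trans (add_comm _ _)
  simp only [seqEval_add, seqEval_sub] at hE hF
  have hEz := hE z
  have hEz' := hE z'
  have hFz := hF z
  have hFz' := hF z'
  rw [seqEval_reflect _ _ hyy'] at hEz hFz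
  rw [seqEval_reflect _ _ ((mul_comm _ _).trans hyy')] at hEz' hFz'
  calc 4 * (seqEval (g * v) e z * seqEval (g * v) e z' + seqEval (g * v) f z * seqEval (g * v) f z')
      = 2 * seqEval (g * v) e z * (2 * seqEval (g * v) e z') +
          2 * seqEval (g * v) f z * (2 * seqEval (g * v) f z') := by ring
    _ = 2 * (2 * g) * w := by
      rw [hEz, hEz', hFz, hFz', turyn_identity (pow_mul_pow_eq_one _ hyy'),
        hab.seqEval_complementary hzz', hcd.seqEval_complementary hv hyy' (by rw [← pow_mul, hz])]
    _ = 4 * (g * w) := by ring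

theorem AdjoinRoot.eq_zero_of_sum_smul_root_pow_eq_zero {f : R[X]} (hf : f.Monic) {m : ℕ → R}
    (h : ∑ i ∈ range f.natDegree, m i • root f ^ i = 0) {k : ℕ} (hk : k < f.natDegree) :
    m k = 0 :=
  Fintype.linearIndependent_iff.mp (powerBasis' hf).basis.linearIndependent (fun i => m i)
    (by simpa [PowerBasis.basis_eq_pow, Fin.sum_univ_eq_sum_range (fun i => m i • root f ^ i)]
      using h) ⟨k, hk⟩

end

theorem eq_of_seqEval_root_eq {N : ℕ} (hN : N ≠ 0) {m m' : ℕ → ℤ}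
    (h : seqEval N m (AdjoinRoot.root (X ^ N + 1 : ℤ[X])) =
      seqEval N m' (AdjoinRoot.root (X ^ N + 1 : ℤ[X]))) {k : ℕ} (hk : k < N) : m k = m' k := by
  have hmonic : (X ^ N + 1 : ℤ[X]).Monic := by simpa using monic_X_pow_add_C (1 : ℤ) hN
  have hdeg : (X ^ N + 1 : ℤ[X]).natDegree = N := by
    simpa using natDegree_X_pow_add_C (n := N) (r := (1 : ℤ))
  rw [← sub_eq_zero, ← seqEval_sub, seqEval] at h
  refine sub_eq_zero.mp (AdjoinRoot.eq_zero_of_sum_smul_root_pow_eq_zero hmonic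
    (m := fun i => m i - m' i) ?_ (by rwa [hdeg]))
  simpa [hdeg, zsmul_eq_mul] using h

theorem IsTurynProduct.NAF_add_NAF {g v w : ℕ} {a b c d e f : ℕ → ℤ}
    (hef : IsTurynProduct g v a b c d e f) (hab : IsGolayPair g a b)
    (hcd : IsNegaComplementaryPair v w c d) {k : ℕ} (hk : k < g * v) :
    NAF (g * v) e k + NAF (g * v) f k = if k = 0 then (g * w : ℤ) else 0 := by
  have hN : g * v ≠ 0 := by omega
  set z := AdjoinRoot.root (X ^ (g * v) + 1 : ℤ[X])
  have hz : z ^ (g * v) = -1 := by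
    have h0 := AdjoinRoot.mk_self (f := (X ^ (g * v) + 1 : ℤ[X]))
    rw [map_add, map_pow, AdjoinRoot.mk_X, map_one] at h0
    linear_combination h0
  obtain ⟨z', hzz'⟩ : ∃ z', z * z' = 1 :=
    ⟨-z ^ (g * v - 1), by
      rw [mul_neg, ← pow_succ', Nat.sub_add_cancel (Nat.pos_of_ne_zero hN), hz, neg_neg]⟩
  have key := hef.seqEval_complementary hab hcd
    (Nat.pos_of_ne_zero (right_ne_zero_of_mul hN)) hzz' hz
  -- the factor `4` is cancelled only after passing to the integer coefficients
  have hcoeff := eq_of_seqEval_root_eq hN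
    (m := fun k => 4 * (NAF (g * v) e k + NAF (g * v) f k))
    (m' := fun k => if k = 0 then 4 * (g * w : ℤ) else 0) ?_ hk
  · split_ifs at hcoeff ⊢ <;> omega
  rw [seqEval_const_mul, seqEval_add, ← seqEval_mul_seqEval_of_pow_eq_neg_one _ _ hzz' hz,
    ← seqEval_mul_seqEval_of_pow_eq_neg_one _ _ hzz' hz, seqEval_ite_zero (Nat.pos_of_ne_zero hN)]
  push_cast
  exact key

theorem eq_zero_or_one_or_neg_one_of_two_mul_eq {a b c d x : ℤ} (ha : a = 1 ∨ a = -1)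
    (hb : b = 1 ∨ b = -1) (hc : c = 0 ∨ c = 1 ∨ c = -1) (hd : d = 0 ∨ d = 1 ∨ d = -1)
    (hx : 2 * x = (a + b) * c + (a - b) * d) : x = 0 ∨ x = 1 ∨ x = -1 := by
  rcases ha with rfl | rfl <;> rcases hb with rfl | rfl <;> omega

theorem mod_lt_and_div_lt_of_lt_mul {g v i : ℕ} (hi : i < g * v) :
    i % g < g ∧ i / g < v ∧ v - 1 - i / g < v := by
  have hg : 0 < g := Nat.pos_of_ne_zero (by rintro rfl; simp at hi)
  have hq : i / g < v := Nat.div_lt_of_lt_mul hi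
  refine ⟨Nat.mod_lt i hg, hq, ?_⟩
  generalize i / g = q at hq ⊢
  omega

/-- the Turyn product of a Golay pair `(a,b)` of length `g` and a
negaperiodic complementary ternary pair `(c,d)` of length `v` and total weight `w` is a
negaperiodic complementary ternary pair `(e,f)` of length `gv` and weight `gw`.
The coefficient sequences at index `i = q·g + r` are
`2 e_i = (a_r+b_r)c_q + (a_r-b_r)d_{v-1-q}` and `2 f_i = (b_r-a_r)c_{v-1-q} + (a_r+b_r)d_q`. -/
theorem turyn_product_nct_pair (g v w : ℕ) (hg : 0 < g) (hv : 0 < v)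
    (a b c d e f : ℕ → ℤ)
    (hab : ∀ i, i < g → (a i = 1 ∨ a i = -1) ∧ (b i = 1 ∨ b i = -1))
    (hgolay : ∀ k, 0 < k → k < g → AF g a k + AF g b k = 0)
    (hcd : ∀ i, i < v → (c i = 0 ∨ c i = 1 ∨ c i = -1) ∧ (d i = 0 ∨ d i = 1 ∨ d i = -1))
    (hweight : ∑ i ∈ Finset.range v, ((c i) ^ 2 + (d i) ^ 2) = (w : ℤ))
    (hnct : ∀ k, 0 < k → k < v → NAF v c k + NAF v d k = 0)
    (he : ∀ i, i < g * v →
      2 * e i = (a (i % g) + b (i % g)) * c (i / g) + (a (i % g) - b (i % g)) * d (v - 1 - i / g))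
    (hf : ∀ i, i < g * v →
      2 * f i = (b (i % g) - a (i % g)) * c (v - 1 - i / g) + (a (i % g) + b (i % g)) * d (i / g)) :
    (∀ i, i < g * v → e i = 0 ∨ e i = 1 ∨ e i = -1) ∧
    (∀ i, i < g * v → f i = 0 ∨ f i = 1 ∨ f i = -1) ∧
    (∑ i ∈ Finset.range (g * v), ((e i) ^ 2 + (f i) ^ 2) = ((g * w : ℕ) : ℤ)) ∧
    (∀ k, 0 < k → k < g * v → NAF (g * v) e k + NAF (g * v) f k = 0) := by
  have hef : IsTurynProduct g v a b c d e f := ⟨he, hf⟩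
  have hab' : IsGolayPair g a b := ⟨hab, hgolay⟩
  have hcd' : IsNegaComplementaryPair v w c d := ⟨hweight, hnct⟩
  refine ⟨fun i hi => ?_, fun i hi => ?_, ?_, fun k hk0 hk => ?_⟩
  · obtain ⟨hr, hq, hq'⟩ := mod_lt_and_div_lt_of_lt_mul hi
    exact eq_zero_or_one_or_neg_one_of_two_mul_eq (hab _ hr).1 (hab _ hr).2 (hcd _ hq).1
      (hcd _ hq').2 (he i hi)
  · obtain ⟨hr, hq, hq'⟩ := mod_lt_and_div_lt_of_lt_mul hi
    exact eq_zero_or_one_or_neg_one_of_two_mul_eq (hab _ hr).2 (hab _ hr).1 (hcd _ hq).2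
      (hcd _ hq').1 (by rw [hf i hi]; ring)
  · have h0 := hef.NAF_add_NAF hab' hcd' (Nat.mul_pos hg hv)
    rw [if_pos rfl, NAF_zero_eq_AF_zero, NAF_zero_eq_AF_zero, AF_zero_eq_sum_sq, AF_zero_eq_sum_sq,
      ← sum_add_distrib] at h0
    exact_mod_cast h0
  · simpa [hk0.ne'] using hef.NAF_add_NAF hab' hcd' hk
end

section
/- Let a' = (0, a_1, ..., a_{v-1}) be a sequence with a_k = a_{v-k} for all 0 < k < v, and let a'' = (x, a_1, ..., a_{v-1}) for any integer x. Then NAF_{a''}(k) = NAF_{a'}(k) for all 0 < k < v; that is, changing the first entry of a quasi-symmetric sequence does not change its negaperiodic autocorrelations at nonzero shifts. -/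
lemma af_shift (v k : ℕ) (a : ℕ → ℤ) (x : ℤ) (ha0 : a 0 = 0) (hk : 0 < k) :
    AF v (fun i => if i = 0 then x else a i) k
      = AF v a k + (if 0 < v - k then x * a k else 0) := by
  unfold AF
  have h : ∀ i ∈ Finset.range (v - k),
      (fun i => if i = 0 then x else a i) i * (fun i => if i = 0 then x else a i) (i + k)
        = a i * a (i + k) + (if i = 0 then x * a k else 0) := by
    intro i _
    by_cases hi : i = 0
    · subst hi
      simp [ha0, hk.ne']
    · simp [hi, fun h => hi (Nat.eq_zero_of_add_eq_zero_right h), Nat.add_pos_right i hk |>.ne']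
  rw [Finset.sum_congr rfl h, Finset.sum_add_distrib, Finset.sum_ite_eq' (Finset.range (v - k)) 0]
  simp [Finset.mem_range]

/-- changing the first entry of a quasi-symmetric sequence
(`a_k = a_{v-k}` for `0 < k < v`) does not change its negaperiodic autocorrelations
at nonzero shifts. -/
theorem naf_first_entry_of_quasi_symmetric (v : ℕ) (a : ℕ → ℤ) (x : ℤ)
    (ha0 : a 0 = 0)
    (hsym : ∀ k, 0 < k → k < v → a k = a (v - k)) :
    ∀ k, 0 < k → k < v →
      NAF v (fun i => if i = 0 then x else a i) k = NAF v a k := by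
  intro k hk hkv
  have h1 : 0 < v - k := Nat.sub_pos_of_lt hkv
  have h2 : 0 < v - (v - k) := by omega
  have h3 : v - k < v := by omega
  unfold NAF
  rw [af_shift v k a x ha0 hk, af_shift v (v - k) a x ha0 h1]
  simp only [h1, h2, if_pos]
  rw [hsym k hk hkv]
  ring
end

section
/- Let A, B, C, D be ±1 circulant matrices of order t satisfying AA^T + BB^T + CC^T + DD^T = 4tI and AB^T + CD^T = BA^T + DC^T (quasi-Williamson matrices). Then the 4t × 4t block matrix [[A, B, C, D], [-B, A, -D, C], [-C^T, D^T, A^T, -B^T], [-D^T, -C^T, B^T, A^T]] is a Hadamard matrix. -/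
def cycShift (t : ℕ) : Matrix (Fin t) (Fin t) ℤ :=
  Matrix.of fun i j => if (i : ℕ) + 1 = (j : ℕ) then 1
    else if (i : ℕ) = t - 1 ∧ (j : ℕ) = 0 then 1 else 0

def IsCirculant {t : ℕ} (A : Matrix (Fin t) (Fin t) ℤ) : Prop :=
  ∃ c : ℕ → ℤ, A = ∑ i ∈ Finset.range t, c i • (cycShift t) ^ i

def qwArray {t : ℕ} (A B C D : Matrix (Fin t) (Fin t) ℤ) :
    Matrix ((Fin t ⊕ Fin t) ⊕ (Fin t ⊕ Fin t)) ((Fin t ⊕ Fin t) ⊕ (Fin t ⊕ Fin t)) ℤ :=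
  Matrix.fromBlocks
    (Matrix.fromBlocks A B (-B) A)
    (Matrix.fromBlocks C D (-D) C)
    (Matrix.fromBlocks (-C.transpose) D.transpose (-D.transpose) (-C.transpose))
    (Matrix.fromBlocks A.transpose (-B.transpose) B.transpose A.transpose)

/-! Writing `X = [[A, B], [-B, A]]` and `Y = [[C, D], [-D, C]]`, the array is
`H = [[X, Y], [-Yᵀ, Xᵀ]]`, and `H Hᵀ = [[XXᵀ + YYᵀ, YX - XY], [XᵀYᵀ - YᵀXᵀ, XᵀX + YᵀY]]`.
Circulant matrices are polynomials in the permutation matrix `P`, which commutes with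
`Pᵀ = P⁻¹`; hence `A, B, C, D` and their transposes all commute. Then `X` and `Y` commute and
are normal, and `XXᵀ + YYᵀ` has diagonal blocks `AAᵀ + BBᵀ + CCᵀ + DDᵀ = 4t I` and
off-diagonal blocks `±(BAᵀ + DCᵀ - ABᵀ - CDᵀ) = 0`, so `H Hᵀ = 4t I`. -/

namespace Matrix

variable {n : Type*} {R : Type*}

section IsPmOne

variable {l m o : Type*} [Ring R]

def IsPmOne (M : Matrix n m R) : Prop :=
  ∀ i j, M i j = 1 ∨ M i j = -1

theorem IsPmOne.neg {M : Matrix n m R} (hM : M.IsPmOne) : (-M).IsPmOne := fun i j => by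
  rcases hM i j with h | h <;> simp [h]

theorem IsPmOne.transpose {M : Matrix n m R} (hM : M.IsPmOne) : Mᵀ.IsPmOne :=
  fun i j => hM j i

theorem IsPmOne.fromBlocks {M₁ : Matrix n l R} {M₂ : Matrix n m R} {M₃ : Matrix o l R}
    {M₄ : Matrix o m R} (h₁ : M₁.IsPmOne) (h₂ : M₂.IsPmOne) (h₃ : M₃.IsPmOne)
    (h₄ : M₄.IsPmOne) : (Matrix.fromBlocks M₁ M₂ M₃ M₄).IsPmOne := by
  rintro (i | i) (j | j)
  exacts [h₁ i j, h₂ i j, h₃ i j, h₄ i j]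

end IsPmOne

/-- `[[A, B], [-B, A]]`, which multiplies like the complex number `A + iB`. -/
def cplxBlock [Neg R] (A B : Matrix n n R) : Matrix (n ⊕ n) (n ⊕ n) R :=
  fromBlocks A B (-B) A

theorem IsPmOne.cplxBlock [Ring R] {A B : Matrix n n R} (hA : A.IsPmOne) (hB : B.IsPmOne) :
    (cplxBlock A B).IsPmOne :=
  hA.fromBlocks hB hB.neg hA

theorem cplxBlock_transpose [Ring R] (A B : Matrix n n R) :
    (cplxBlock A B)ᵀ = cplxBlock Aᵀ (-Bᵀ) := by
  simp [cplxBlock, fromBlocks_transpose]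

theorem cplxBlock_add [Ring R] (A B C D : Matrix n n R) :
    cplxBlock A B + cplxBlock C D = cplxBlock (A + C) (B + D) := by
  simp only [cplxBlock, fromBlocks_add, neg_add]

theorem cplxBlock_mul [Fintype n] [Ring R] (A B C D : Matrix n n R) :
    cplxBlock A B * cplxBlock C D = cplxBlock (A * C - B * D) (A * D + B * C) := by
  simp only [cplxBlock, fromBlocks_multiply, Matrix.neg_mul, Matrix.mul_neg, fromBlocks_inj]
  exact ⟨by abel, trivial, by abel, by abel⟩

theorem cplxBlock_smul_one [DecidableEq n] [Ring R] (r : R) :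
    cplxBlock (r • (1 : Matrix n n R)) 0 = r • 1 := by
  rw [cplxBlock, neg_zero, ← smul_zero r, ← fromBlocks_smul, fromBlocks_one]

theorem cplxBlock_commute [Fintype n] [Ring R] {A B C D : Matrix n n R} (hAC : Commute A C)
    (hAD : Commute A D) (hBC : Commute B C) (hBD : Commute B D) :
    Commute (cplxBlock A B) (cplxBlock C D) := by
  rw [Commute, SemiconjBy, cplxBlock_mul, cplxBlock_mul, hAC.eq, hAD.eq, hBC.eq, hBD.eq,
    add_comm (D * A)]

theorem cplxBlock_commute_transpose_self [Fintype n] [CommRing R] {A B : Matrix n n R}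
    (hA : Commute A Aᵀ) (hB : Commute B Bᵀ) (hAB : Commute A Bᵀ) :
    Commute (cplxBlock A B) (cplxBlock A B)ᵀ := by
  have hBA : B * Aᵀ = Aᵀ * B := by
    simpa only [transpose_mul, transpose_transpose] using congrArg transpose hAB.eq
  simp only [cplxBlock_transpose, Commute, SemiconjBy, cplxBlock_mul, Matrix.mul_neg,
    Matrix.neg_mul, hA.eq, hB.eq, hAB.eq, hBA]
  congr 1; abel

theorem cplxBlock_mul_transpose_add [Fintype n] [Ring R] (A B C D : Matrix n n R) :
    cplxBlock A B * (cplxBlock A B)ᵀ + cplxBlock C D * (cplxBlock C D)ᵀ =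
      cplxBlock (A * Aᵀ + B * Bᵀ + C * Cᵀ + D * Dᵀ) (B * Aᵀ + D * Cᵀ - (A * Bᵀ + C * Dᵀ)) := by
  rw [cplxBlock_transpose, cplxBlock_transpose, cplxBlock_mul, cplxBlock_mul, cplxBlock_add]
  simp only [Matrix.mul_neg]
  congr 1 <;> abel

theorem fromBlocks_mul_transpose_eq_smul_one [Fintype n] [DecidableEq n] [CommRing R]
    {X Y : Matrix n n R} (hXY : Commute X Y) (hX : Commute X Xᵀ) (hY : Commute Y Yᵀ) {r : R}
    (h : X * Xᵀ + Y * Yᵀ = r • 1) :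
    fromBlocks X Y (-Yᵀ) Xᵀ * (fromBlocks X Y (-Yᵀ) Xᵀ)ᵀ = r • 1 := by
  have hXYt : Xᵀ * Yᵀ = Yᵀ * Xᵀ := by rw [← transpose_mul, ← transpose_mul, hXY.eq]
  rw [fromBlocks_transpose, fromBlocks_multiply, ← fromBlocks_one, fromBlocks_smul, smul_zero]
  simp only [transpose_transpose, transpose_neg, Matrix.mul_neg, Matrix.neg_mul, neg_neg,
    hXY.eq, hXYt, ← hX.eq, ← hY.eq, add_comm (Y * Yᵀ), h, neg_add_cancel]

end Matrix

open Matrix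

theorem cycShift_succ_eq_toMatrix (n : ℕ) :
    cycShift (n + 1) = (finRotate (n + 1)).toPEquiv.toMatrix := by
  ext i j
  simp only [cycShift, of_apply, PEquiv.toMatrix_apply, Equiv.toPEquiv_apply, Option.mem_def,
    Option.some_inj, finRotate_apply, Fin.ext_iff]
  rcases Fin.eq_castSucc_or_eq_last i with ⟨i, rfl⟩ | rfl
  · rw [Fin.coeSucc_eq_succ, Fin.val_succ, Fin.val_castSucc]
    split_ifs <;> omega
  · simp only [Fin.last_add_one, Fin.val_last, Fin.val_zero]
    split_ifs <;> omega

theorem cycShift_commute_transpose (t : ℕ) : Commute (cycShift t) (cycShift t)ᵀ := by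
  cases t with
  | zero => exact Subsingleton.elim _ _
  | succ n =>
    rw [cycShift_succ_eq_toMatrix, Commute, SemiconjBy, ← PEquiv.toMatrix_symm,
      ← PEquiv.toMatrix_trans, ← PEquiv.toMatrix_trans, ← Equiv.toPEquiv_symm,
      ← Equiv.toPEquiv_trans, ← Equiv.toPEquiv_trans, Equiv.self_trans_symm,
      Equiv.symm_trans_self]

namespace IsCirculant

variable {t : ℕ} {X Y : Matrix (Fin t) (Fin t) ℤ}

theorem commute (hX : IsCirculant X) (hY : IsCirculant Y) : Commute X Y := by
  obtain ⟨c, rfl⟩ := hX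
  obtain ⟨d, rfl⟩ := hY
  refine .sum_left _ _ _ fun i _ => .sum_right _ _ _ fun j _ => ?_
  exact (((Commute.refl (cycShift t)).pow_pow i j).smul_left (c i)).smul_right (d j)

theorem commute_transpose (hX : IsCirculant X) (hY : IsCirculant Y) : Commute X Yᵀ := by
  obtain ⟨c, rfl⟩ := hX
  obtain ⟨d, rfl⟩ := hY
  rw [transpose_sum]
  refine .sum_left _ _ _ fun i _ => .sum_right _ _ _ fun j _ => ?_
  rw [transpose_smul, transpose_pow]
  exact (((cycShift_commute_transpose t).pow_pow i j).smul_left (c i)).smul_right (d j)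

end IsCirculant

theorem qwArray_eq_fromBlocks {t : ℕ} (A B C D : Matrix (Fin t) (Fin t) ℤ) :
    qwArray A B C D =
      fromBlocks (cplxBlock A B) (cplxBlock C D) (-(cplxBlock C D)ᵀ) (cplxBlock A B)ᵀ := by
  rw [cplxBlock_transpose, cplxBlock_transpose]
  simp only [qwArray, cplxBlock, fromBlocks_neg, neg_neg]

/-- quasi-Williamson matrices of order `t` plugged into the array give a
Hadamard matrix of order `4t`. -/
theorem quasi_williamson_gives_hadamard (t : ℕ)
    (A B C D : Matrix (Fin t) (Fin t) ℤ)
    (hAc : IsCirculant A) (hBc : IsCirculant B) (hCc : IsCirculant C) (hDc : IsCirculant D)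
    (hAe : ∀ i j, A i j = 1 ∨ A i j = -1) (hBe : ∀ i j, B i j = 1 ∨ B i j = -1)
    (hCe : ∀ i j, C i j = 1 ∨ C i j = -1) (hDe : ∀ i j, D i j = 1 ∨ D i j = -1)
    (hsum : A * A.transpose + B * B.transpose + C * C.transpose + D * D.transpose =
      ((4 * t : ℕ) : ℤ) • (1 : Matrix (Fin t) (Fin t) ℤ))
    (hcross : A * B.transpose + C * D.transpose = B * A.transpose + D * C.transpose) :
    (∀ i j, qwArray A B C D i j = 1 ∨ qwArray A B C D i j = -1) ∧
    qwArray A B C D * (qwArray A B C D).transpose =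
      ((4 * t : ℕ) : ℤ) • (1 : Matrix ((Fin t ⊕ Fin t) ⊕ (Fin t ⊕ Fin t))
        ((Fin t ⊕ Fin t) ⊕ (Fin t ⊕ Fin t)) ℤ) := by
  rw [qwArray_eq_fromBlocks]
  have hX : (cplxBlock A B).IsPmOne := IsPmOne.cplxBlock hAe hBe
  have hY : (cplxBlock C D).IsPmOne := IsPmOne.cplxBlock hCe hDe
  refine ⟨hX.fromBlocks hY hY.transpose.neg hX.transpose, ?_⟩
  apply fromBlocks_mul_transpose_eq_smul_one
  · exact cplxBlock_commute (hAc.commute hCc) (hAc.commute hDc) (hBc.commute hCc)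
      (hBc.commute hDc)
  · exact cplxBlock_commute_transpose_self (hAc.commute_transpose hAc)
      (hBc.commute_transpose hBc) (hAc.commute_transpose hBc)
  · exact cplxBlock_commute_transpose_self (hCc.commute_transpose hCc)
      (hDc.commute_transpose hDc) (hCc.commute_transpose hDc)
  · rw [cplxBlock_mul_transpose_add, hsum, hcross, sub_self, cplxBlock_smul_one]
end
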